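/- arXiv:1211.0423 — 9 statements merged into one kernel-verified Lean document; each statement's English description precedes it below -/
import Mathlib

section
/- Let n ∈ ℕ with n ≥ 3, let 𝒯=(T,w) be a positive-weighted tree, and suppose 1,…,n are (distinct) vertices of T. Define D_{î} = D_{[n]∖{i}}(𝒯) for each i ∈ [n]. Then for every i ∈ [n] one has (n−2)·D_{î} ≤ Σ_{j ∈ [n]∖{i}} D_{ĵ}, and at most one of these n inequalities is an equality. -/
/-!
In a tree, a connected subgraph containing a vertex set `I` must use every edge whose removal
separates two points of `I`, and the union of the paths from one point of `I` to the others uses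
exactly these edges; so `D_I` is their total weight. Let `W = D_{[n]}` and let `d i` be the weight
of the edges separating `i` from all the other points, so that `D_î = W - d i`. Deleting an edge
splits a tree into only two parts, so for `n ≥ 3` no edge separates two different points from all
others, and `∑ d j ≤ W`. Now `∑_{j ≠ i} D_ĵ - (n - 2) D_î = (W - ∑ d j) + (n - 1) d i ≥ 0`, with
equality only if `d i = 0` and `∑ d j = W`. Equality at `i ≠ i'` is impossible: an edge on the path
from `i` to `i'` separates neither of them from all others (as `d i = d i' = 0`), nor any third
point, so `∑ d j < W`.
-/

open SimpleGraph Finset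

/-- The total weight of a subgraph: the sum of the weights of its edges. -/
noncomputable def subgraphWeight {V : Type} [Fintype V] {G : SimpleGraph V}
    (w : Sym2 V → ℝ) (R : G.Subgraph) : ℝ :=
  ∑ e ∈ (Set.toFinite R.edgeSet).toFinset, w e

/-- `graphDist G w I` is the minimum of `subgraphWeight w R` over connected
subgraphs `R` of `G` whose vertex set contains `I`. -/
noncomputable def graphDist {V : Type} [Fintype V] (G : SimpleGraph V)
    (w : Sym2 V → ℝ) (I : Set V) : ℝ :=
  sInf { x : ℝ | ∃ R : G.Subgraph, R.Connected ∧ I ⊆ R.verts ∧ subgraphWeight w R = x }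

/-- A weight function is positive on a graph if every edge has positive weight. -/
def PosWeighted {V : Type} (G : SimpleGraph V) (w : Sym2 V → ℝ) : Prop :=
  ∀ e ∈ G.edgeSet, 0 < w e


section Averaging

variable {α : Type*} [Fintype α] [DecidableEq α]

lemma sum_erase_sub_card_sub_two_mul (W : ℝ) (d : α → ℝ) (i : α) :
    ∑ j ∈ Finset.univ.erase i, (W - d j) - ((Fintype.card α : ℝ) - 2) * (W - d i) =
      (W - ∑ j, d j) + ((Fintype.card α : ℝ) - 1) * d i := by
  have hd := Finset.add_sum_erase Finset.univ d (Finset.mem_univ i)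
  have hcard : ((Finset.univ.erase i).card : ℝ) = Fintype.card α - 1 := by
    rw [Finset.card_erase_of_mem (Finset.mem_univ i), Finset.card_univ,
      Nat.cast_sub (Fintype.card_pos_iff.mpr ⟨i⟩), Nat.cast_one]
  rw [Finset.sum_sub_distrib, Finset.sum_const, nsmul_eq_mul, hcard]
  linear_combination (-1 : ℝ) * hd

variable {W : ℝ} {d : α → ℝ}

lemma card_sub_two_mul_sub_le_sum_erase (hd : ∀ j, 0 ≤ d j) (hW : ∑ j, d j ≤ W) (i : α) :
    ((Fintype.card α : ℝ) - 2) * (W - d i) ≤ ∑ j ∈ Finset.univ.erase i, (W - d j) := by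
  have hcard : (1 : ℝ) ≤ Fintype.card α := by exact_mod_cast Fintype.card_pos_iff.mpr ⟨i⟩
  have := sum_erase_sub_card_sub_two_mul W d i
  nlinarith [hd i]

lemma eq_zero_and_sum_eq_of_card_sub_two_mul_sub_eq (hα : 2 ≤ Fintype.card α)
    (hd : ∀ j, 0 ≤ d j) (hW : ∑ j, d j ≤ W) {i : α}
    (h : ((Fintype.card α : ℝ) - 2) * (W - d i) = ∑ j ∈ Finset.univ.erase i, (W - d j)) :
    d i = 0 ∧ ∑ j, d j = W := by
  have hcard : (2 : ℝ) ≤ Fintype.card α := by exact_mod_cast hα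
  have := sum_erase_sub_card_sub_two_mul W d i
  have hdi : ((Fintype.card α : ℝ) - 1) * d i = 0 := by nlinarith [hd i]
  refine ⟨(mul_eq_zero.mp hdi).resolve_left (by linarith), ?_⟩
  nlinarith [hd i]

end Averaging

namespace SimpleGraph

variable {V : Type} {T : SimpleGraph V} {e : Sym2 V} {a b c u v : V}

def Separates (T : SimpleGraph V) (e : Sym2 V) (a b : V) : Prop :=
  ¬ (T.deleteEdges {e}).Reachable a b

lemma Separates.symm (h : T.Separates e a b) : T.Separates e b a :=
  fun hr => h hr.symm

lemma Separates.ne (h : T.Separates e a b) : a ≠ b := by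
  rintro rfl
  exact h .rfl

lemma Separates.trans_not (hab : T.Separates e a b) (hbc : ¬ T.Separates e b c) :
    T.Separates e a c :=
  fun hac => hab (hac.trans (not_not.mp hbc).symm)

lemma IsAcyclic.separates_of_mem_edges (hT : T.IsAcyclic) {p : T.Walk a b} (hp : p.IsPath)
    (he : e ∈ p.edges) : T.Separates e a b := by
  classical
  rintro ⟨q⟩
  have hpq : p = (q.mapLe (deleteEdges_le _)).bypass :=
    congrArg Subtype.val ((hT.subsingleton_path a b).elim ⟨p, hp⟩ (q.mapLe _).toPath)
  have heq : e ∈ q.edges := by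
    rw [← Walk.edges_mapLe_eq_edges (deleteEdges_le {e})]
    exact Walk.edges_bypass_subset_edges _ (hpq ▸ he)
  simpa using q.edges_subset_edgeSet heq

lemma IsTree.exists_separates (hT : T.IsTree) (hab : a ≠ b) :
    ∃ e ∈ T.edgeSet, T.Separates e a b := by
  obtain ⟨p, hp, -⟩ := hT.existsUnique_path a b
  cases p with
  | nil => exact absurd rfl hab
  | cons h q =>
    exact ⟨_, h, hT.isAcyclic.separates_of_mem_edges hp List.mem_cons_self⟩

lemma Preconnected.reachable_deleteEdges_or (hT : T.Preconnected) (huv : T.Adj u v) (c : V) :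
    (T.deleteEdges {s(u, v)}).Reachable c u ∨ (T.deleteEdges {s(u, v)}).Reachable c v := by
  suffices key : ∀ {c z : V} (_ : T.Walk c z),
      (T.deleteEdges {s(u, v)}).Reachable z u ∨ (T.deleteEdges {s(u, v)}).Reachable z v →
      (T.deleteEdges {s(u, v)}).Reachable c u ∨ (T.deleteEdges {s(u, v)}).Reachable c v from
    key (hT c u).some (.inl .rfl)
  intro c z p
  induction p with
  | nil => exact id
  | @cons c d z hcd q ih =>
    intro hz
    by_cases hce : s(c, d) = s(u, v)
    · rcases Sym2.eq_iff.mp hce with ⟨rfl, -⟩ | ⟨rfl, -⟩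
      · exact .inl .rfl
      · exact .inr .rfl
    · have hcd' : (T.deleteEdges {s(u, v)}).Adj c d := by simp [hcd, hce]
      exact (ih hz).imp hcd'.reachable.trans hcd'.reachable.trans

lemma Separates.not_separates (hT : T.Preconnected) (he : e ∈ T.edgeSet)
    (hab : T.Separates e a b) (hac : T.Separates e a c) : ¬ T.Separates e b c := by
  induction e using Sym2.ind with
  | _ u v =>
    intro hbc
    rcases Preconnected.reachable_deleteEdges_or hT he a with ha | ha <;>
      rcases Preconnected.reachable_deleteEdges_or hT he b with hb | hb <;>
      rcases Preconnected.reachable_deleteEdges_or hT he c with hc | hc <;>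
      first
        | exact hab (ha.trans hb.symm)
        | exact hac (ha.trans hc.symm)
        | exact hbc (hb.trans hc.symm)

section Steiner

variable [Finite V]

open Classical in
noncomputable def steinerEdges (T : SimpleGraph V) (I : Set V) : Finset (Sym2 V) :=
  (Set.toFinite T.edgeSet).toFinset.filter fun e => ∃ a ∈ I, ∃ b ∈ I, T.Separates e a b

lemma mem_steinerEdges {I : Set V} :
    e ∈ steinerEdges T I ↔ e ∈ T.edgeSet ∧ ∃ a ∈ I, ∃ b ∈ I, T.Separates e a b := by
  classical
  rw [steinerEdges, Finset.mem_filter, Set.Finite.mem_toFinset]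

lemma steinerEdges_mono {I J : Set V} (h : I ⊆ J) : steinerEdges T I ⊆ steinerEdges T J := by
  simp only [Finset.subset_iff, mem_steinerEdges]
  rintro e ⟨he, a, ha, b, hb, hab⟩
  exact ⟨he, a, h ha, b, h hb, hab⟩

lemma steinerEdges_subset_edgeSet {R : T.Subgraph} (hR : R.Connected) {I : Set V}
    (hI : I ⊆ R.verts) : ↑(steinerEdges T I) ⊆ R.edgeSet := by
  intro e he
  obtain ⟨-, a, ha, b, hb, hab⟩ := mem_steinerEdges.mp he
  obtain ⟨q⟩ := hR.preconnected ⟨a, hI ha⟩ ⟨b, hI hb⟩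
  obtain ⟨f, hf, rfl⟩ := List.mem_map.mp
    (Walk.edges_map R.hom q ▸ (q.map R.hom).mem_edges_of_not_reachable_deleteEdges hab)
  simpa using q.edges_subset_edgeSet hf

lemma IsTree.exists_subgraph_edgeSet_eq_steinerEdges (hT : T.IsTree) {I : Set V}
    (hI : I.Nonempty) :
    ∃ R : T.Subgraph, R.Connected ∧ I ⊆ R.verts ∧ R.edgeSet = steinerEdges T I := by
  obtain ⟨a₀, ha₀⟩ := hI
  have hS : (Set.toFinite I).toFinset.Nonempty := ⟨a₀, by simpa using ha₀⟩
  choose path hpath using fun b => (hT.existsUnique_path a₀ b).exists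
  set R := (Set.toFinite I).toFinset.sup' hS fun b => (path b).toSubgraph
  have hle : ∀ b ∈ I, (path b).toSubgraph ≤ R := fun b hb =>
    Finset.le_sup' (fun b => (path b).toSubgraph) (by simpa using hb)
  refine ⟨R, ?_, fun b hb => (hle b hb).1 (path b).end_mem_verts_toSubgraph, ?_⟩
  · refine (Finset.sup'_induction (p := fun H : T.Subgraph => H.Connected ∧ a₀ ∈ H.verts) hS _
      (fun H hH K hK => ⟨Subgraph.connected_sup hH.1.preconnected hK.1.preconnected
        ⟨a₀, hH.2, hK.2⟩, .inl hH.2⟩)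
      fun b _ => ⟨(path b).toSubgraph_connected, (path b).start_mem_verts_toSubgraph⟩).1
  refine subset_antisymm (Finset.sup'_induction (p := fun H : T.Subgraph =>
      H.edgeSet ⊆ steinerEdges T I) hS _
    (fun H hH K hK => by simpa only [Subgraph.edgeSet_sup] using Set.union_subset hH hK)
    fun b hb e he => ?_) fun e he => ?_
  · rw [Walk.edgeSet_toSubgraph, Walk.mem_edgeSet] at he
    exact mem_steinerEdges.mpr ⟨(path b).edges_subset_edgeSet he, a₀, ha₀, b, by simpa using hb,
      hT.isAcyclic.separates_of_mem_edges (hpath b) he⟩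
  obtain ⟨-, a, ha, b, hb, hab⟩ := mem_steinerEdges.mp he
  obtain ⟨c, hc, hsep⟩ : ∃ c ∈ I, T.Separates e a₀ c := by
    by_cases ha₀a : T.Separates e a₀ a
    · exact ⟨a, ha, ha₀a⟩
    · exact ⟨b, hb, (hab.symm.trans_not fun h => ha₀a h.symm).symm⟩
  exact Subgraph.edgeSet_mono (hle c hc) ((path c).mem_edges_toSubgraph.mpr
    ((path c).mem_edges_of_not_reachable_deleteEdges hsep))

lemma separates_of_mem_steinerEdges_insert {I : Set V}
    (he : e ∈ steinerEdges T (insert a I)) (he' : e ∉ steinerEdges T I) (hb : b ∈ I) :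
    T.Separates e a b := by
  obtain ⟨heT, x, hx, y, hy, hxy⟩ := mem_steinerEdges.mp he
  have hI : ∀ x ∈ I, ∀ y ∈ I, ¬ T.Separates e x y := fun x hx y hy hxy =>
    he' (mem_steinerEdges.mpr ⟨heT, x, hx, y, hy, hxy⟩)
  rcases hx with rfl | hx <;> rcases hy with rfl | hy
  · exact absurd rfl hxy.ne
  · exact hxy.trans_not (hI y hy b hb)
  · exact hxy.symm.trans_not (hI x hx b hb)
  · exact absurd hxy (hI x hx y hy)

variable {α : Type*} {ι : α → V} {i j : α}

open Classical in
noncomputable def privateEdges (T : SimpleGraph V) (ι : α → V) (i : α) : Finset (Sym2 V) :=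
  steinerEdges T (Set.range ι) \ steinerEdges T (ι '' {j | j ≠ i})

lemma separates_of_mem_privateEdges (he : e ∈ privateEdges T ι i) (hj : j ≠ i) :
    T.Separates e (ι i) (ι j) := by
  classical
  rw [privateEdges, ← Set.insert_image_compl_eq_range ι i, Finset.mem_sdiff] at he
  exact separates_of_mem_steinerEdges_insert he.1 he.2 ⟨j, hj, rfl⟩

lemma notMem_privateEdges_of_separates {i' : α} (he : e ∈ T.edgeSet)
    (hsep : T.Separates e (ι i) (ι i')) (hi : i ≠ j) (hi' : i' ≠ j) :
    e ∉ privateEdges T ι j := by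
  classical
  rw [privateEdges, Finset.mem_sdiff, not_and_not_right]
  exact fun _ => mem_steinerEdges.mpr ⟨he, ι i, ⟨i, hi, rfl⟩, ι i', ⟨i', hi', rfl⟩, hsep⟩

lemma pairwise_disjoint_privateEdges [Fintype α] (hT : T.Preconnected)
    (hα : 3 ≤ Fintype.card α) :
    Pairwise fun i j => Disjoint (privateEdges T ι i) (privateEdges T ι j) := by
  classical
  intro i j hij
  obtain ⟨k, hk⟩ : ({i, j}ᶜ : Finset α).Nonempty := by
    rw [← Finset.card_pos, Finset.card_compl]
    have := Finset.card_le_two (a := i) (b := j)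
    omega
  simp only [Finset.mem_compl, Finset.mem_insert, Finset.mem_singleton, not_or] at hk
  refine Finset.disjoint_left.mpr fun e hei hej => ?_
  have heT : e ∈ T.edgeSet := (mem_steinerEdges.mp (Finset.mem_sdiff.mp hei).1).1
  exact (separates_of_mem_privateEdges hei hk.1).not_separates hT heT
    (separates_of_mem_privateEdges hei (Ne.symm hij))
    (separates_of_mem_privateEdges hej hk.2).symm

end Steiner

section Weight

variable [Fintype V] {w : Sym2 V → ℝ}

lemma sum_steinerEdges_le_subgraphWeight (hw : PosWeighted T w) {R : T.Subgraph}
    (hR : R.Connected) {I : Set V} (hI : I ⊆ R.verts) :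
    ∑ e ∈ steinerEdges T I, w e ≤ subgraphWeight w R :=
  Finset.sum_le_sum_of_subset_of_nonneg
    (fun _ he => (Set.toFinite _).mem_toFinset.mpr (steinerEdges_subset_edgeSet hR hI he))
    fun e he _ => (hw e (R.edgeSet_subset ((Set.toFinite _).mem_toFinset.mp he))).le

lemma graphDist_eq_sum_steinerEdges (hT : T.IsTree) (hw : PosWeighted T w) {I : Set V}
    (hI : I.Nonempty) : graphDist T w I = ∑ e ∈ steinerEdges T I, w e := by
  obtain ⟨R, hR, hIR, hRE⟩ := hT.exists_subgraph_edgeSet_eq_steinerEdges hI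
  have hmem : ∑ e ∈ steinerEdges T I, w e ∈
      {x | ∃ R : T.Subgraph, R.Connected ∧ I ⊆ R.verts ∧ subgraphWeight w R = x} :=
    ⟨R, hR, hIR, Finset.sum_congr (by ext; simp [hRE]) fun _ _ => rfl⟩
  have hlow : ∑ e ∈ steinerEdges T I, w e ∈ lowerBounds
      {x | ∃ R : T.Subgraph, R.Connected ∧ I ⊆ R.verts ∧ subgraphWeight w R = x} := by
    rintro x ⟨R', hR', hIR', rfl⟩
    exact sum_steinerEdges_le_subgraphWeight hw hR' hIR'
  exact le_antisymm (csInf_le ⟨_, hlow⟩ hmem) (le_csInf ⟨_, hmem⟩ hlow)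

lemma weight_pos_of_mem_steinerEdges (hw : PosWeighted T w) {I : Set V}
    (he : e ∈ steinerEdges T I) : 0 < w e :=
  hw e (mem_steinerEdges.mp he).1

variable {α : Type*} {ι : α → V} {i : α}

lemma weight_pos_of_mem_privateEdges (hw : PosWeighted T w) (he : e ∈ privateEdges T ι i) :
    0 < w e := by
  classical
  exact weight_pos_of_mem_steinerEdges hw (Finset.mem_sdiff.mp he).1

lemma graphDist_image_ne_eq [Nontrivial α] (hT : T.IsTree) (hw : PosWeighted T w) (i : α) :
    graphDist T w (ι '' {j | j ≠ i}) =
      ∑ e ∈ steinerEdges T (Set.range ι), w e - ∑ e ∈ privateEdges T ι i, w e := by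
  classical
  obtain ⟨j, hj⟩ := exists_ne i
  rw [graphDist_eq_sum_steinerEdges hT hw ⟨ι j, Set.mem_image_of_mem ι hj⟩, privateEdges,
    Finset.sum_sdiff_eq_sub (steinerEdges_mono (Set.image_subset_range ι _)), sub_sub_cancel]

variable [Fintype α]

open Classical in
lemma sum_privateEdges_eq_sum_biUnion (hT : T.Preconnected) (hα : 3 ≤ Fintype.card α) :
    ∑ j, ∑ e ∈ privateEdges T ι j, w e =
      ∑ e ∈ Finset.univ.biUnion (privateEdges T ι), w e :=
  (Finset.sum_biUnion fun _ _ _ _ hjk => pairwise_disjoint_privateEdges hT hα hjk).symm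

open Classical in
lemma biUnion_privateEdges_subset :
    Finset.univ.biUnion (privateEdges T ι) ⊆ steinerEdges T (Set.range ι) :=
  Finset.biUnion_subset.mpr fun _ _ => Finset.sdiff_subset

lemma sum_privateEdges_le (hT : T.Preconnected) (hw : PosWeighted T w)
    (hα : 3 ≤ Fintype.card α) :
    ∑ j, ∑ e ∈ privateEdges T ι j, w e ≤ ∑ e ∈ steinerEdges T (Set.range ι), w e := by
  classical
  rw [sum_privateEdges_eq_sum_biUnion hT hα]
  exact Finset.sum_le_sum_of_subset_of_nonneg biUnion_privateEdges_subset
    fun e he _ => (weight_pos_of_mem_steinerEdges hw he).le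

lemma sum_privateEdges_lt (hT : T.IsTree) (hw : PosWeighted T w) (hα : 3 ≤ Fintype.card α)
    (hι : ι.Injective) {i' : α} (hii' : i ≠ i') (hi : ∑ e ∈ privateEdges T ι i, w e = 0)
    (hi' : ∑ e ∈ privateEdges T ι i', w e = 0) :
    ∑ j, ∑ e ∈ privateEdges T ι j, w e < ∑ e ∈ steinerEdges T (Set.range ι), w e := by
  classical
  have hempty : ∀ j, ∑ e ∈ privateEdges T ι j, w e = 0 → ∀ e, e ∉ privateEdges T ι j :=
    fun j h e he => (weight_pos_of_mem_privateEdges hw he).ne' ((Finset.sum_eq_zero_iff_of_nonneg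
      fun e he => (weight_pos_of_mem_privateEdges hw he).le).mp h e he)
  obtain ⟨e, heT, hsep⟩ := hT.exists_separates (hι.ne hii')
  have heP : ∀ j, e ∉ privateEdges T ι j := by
    intro j
    by_cases hj : j = i
    · exact hj ▸ hempty i hi e
    by_cases hj' : j = i'
    · exact hj' ▸ hempty i' hi' e
    exact notMem_privateEdges_of_separates heT hsep (Ne.symm hj) (Ne.symm hj')
  have heF : e ∈ steinerEdges T (Set.range ι) :=
    mem_steinerEdges.mpr ⟨heT, _, ⟨i, rfl⟩, _, ⟨i', rfl⟩, hsep⟩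
  rw [sum_privateEdges_eq_sum_biUnion hT.connected.preconnected hα]
  exact Finset.sum_lt_sum_of_subset biUnion_privateEdges_subset heF (by simpa using heP)
    (weight_pos_of_mem_steinerEdges hw heF)
    fun f hf _ => (weight_pos_of_mem_steinerEdges hw hf).le

end Weight

end SimpleGraph

/-- Theorem 3.2(a), necessity: if `1,…,n` are distinct vertices of a
positive-weighted tree, then `(n-2)·D_î ≤ ∑_{j≠i} D_ĵ` for every `i`, and at
most one of these inequalities is an equality. -/
theorem tree_vertices_ineq {n : ℕ} (hn : 3 ≤ n) {V : Type} [Fintype V]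
    (T : SimpleGraph V) (w : Sym2 V → ℝ) (hT : T.IsTree) (hw : PosWeighted T w)
    (ι : Fin n → V) (hι : Function.Injective ι) :
    (∀ i : Fin n, ((n : ℝ) - 2) * graphDist T w (ι '' {j | j ≠ i}) ≤
        ∑ j ∈ Finset.univ.erase i, graphDist T w (ι '' {k | k ≠ j})) ∧
      (∀ i i' : Fin n,
        ((n : ℝ) - 2) * graphDist T w (ι '' {j | j ≠ i}) =
            ∑ j ∈ Finset.univ.erase i, graphDist T w (ι '' {k | k ≠ j}) →
        ((n : ℝ) - 2) * graphDist T w (ι '' {j | j ≠ i'}) =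
            ∑ j ∈ Finset.univ.erase i', graphDist T w (ι '' {k | k ≠ j}) →
        i = i') := by
  have hα : 3 ≤ Fintype.card (Fin n) := by simpa using hn
  have : Nontrivial (Fin n) := Fin.nontrivial_iff_two_le.mpr (by omega)
  set W := ∑ e ∈ steinerEdges T (Set.range ι), w e
  set d : Fin n → ℝ := fun i => ∑ e ∈ privateEdges T ι i, w e
  have hD : ∀ i, graphDist T w (ι '' {j | j ≠ i}) = W - d i := graphDist_image_ne_eq hT hw
  have hd : ∀ i, 0 ≤ d i := fun i => Finset.sum_nonneg fun e he =>
    (weight_pos_of_mem_privateEdges hw he).le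
  have hW : ∑ i, d i ≤ W := sum_privateEdges_le hT.connected.preconnected hw hα
  have hcard : (Fintype.card (Fin n) : ℝ) = n := by simp
  simp only [hD, ← hcard]
  refine ⟨card_sub_two_mul_sub_le_sum_erase hd hW, fun i i' hi hi' => ?_⟩
  by_contra hii'
  obtain ⟨hi0, hsum⟩ := eq_zero_and_sum_eq_of_card_sub_two_mul_sub_eq (by omega) hd hW hi
  obtain ⟨hi'0, -⟩ := eq_zero_and_sum_eq_of_card_sub_two_mul_sub_eq (by omega) hd hW hi'
  exact (sum_privateEdges_lt hT hw hα hι hii' hi0 hi'0).ne hsum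
end

section
/- Let n ∈ ℕ with n ≥ 3 and let {D_{î}}_{i ∈ [n]} be a family of positive real numbers such that for every i ∈ [n] one has (n−2)·D_{î} ≤ Σ_{j ∈ [n]∖{i}} D_{ĵ}, and at most one of these n inequalities is an equality. Then there exists a positive-weighted tree 𝒯=(T,w) with at least n vertices, containing distinct vertices 1,…,n, such that D_{[n]∖{i}}(𝒯) = D_{î} for every i ∈ [n]. -/
open SimpleGraph Finset

/-!
Put `r j = (∑ k, D k) / (n - 1) - D j`. Then `(n - 1) * r j = ∑ k ≠ j, D k - (n - 2) * D j`,
so `r j ≥ 0`, with equality exactly when the `j`-th inequality is an equality, and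
`∑ j ≠ i, r j = D i`. In a star whose leaf `j` hangs on an edge of weight `r j`, a connected
subgraph containing two or more leaves contains their spokes, so `D_î = ∑ j ≠ i, r j = D i`.
If some `r i₀` vanishes, the vertex `i₀` itself is taken as the centre; otherwise the centre
is a new vertex. As at most one `r j` vanishes, all edge weights are positive.
-/

namespace SimpleGraph

variable {V : Type}

/-- With `f c = 0`, the spoke `s(c, v)` of `starGraph c` gets weight `f v`. -/
def endpointSum (f : V → ℝ) : Sym2 V → ℝ :=
  Sym2.lift ⟨fun a b => f a + f b, fun a b => add_comm (f a) (f b)⟩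

@[simp]
lemma endpointSum_mk (f : V → ℝ) (a b : V) : endpointSum f s(a, b) = f a + f b := rfl

lemma endpointSum_nonneg {f : V → ℝ} (hf : ∀ v, 0 ≤ f v) (e : Sym2 V) :
    0 ≤ endpointSum f e := by
  induction e using Sym2.ind with
  | _ a b => exact add_nonneg (hf a) (hf b)

lemma posWeighted_starGraph_endpointSum {c : V} {f : V → ℝ} (hc : f c = 0)
    (hf : ∀ v, v ≠ c → 0 < f v) : PosWeighted (starGraph c) (endpointSum f) := by
  intro e he
  induction e using Sym2.ind with
  | _ a b =>
    obtain ⟨hab, rfl | rfl⟩ := starGraph_adj.mp he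
    · simpa [hc] using hf b hab.symm
    · simpa [hc] using hf a hab

lemma Subgraph.Preconnected.adj_starGraph_center {c v : V}
    {R : (starGraph c).Subgraph} (hR : R.Preconnected) (hnt : R.verts.Nontrivial)
    (hv : v ∈ R.verts) (hvc : v ≠ c) : R.Adj v c := by
  have := hnt.coe_sort
  obtain ⟨u, hu⟩ := hR.exists_adj_of_nontrivial ⟨v, hv⟩
  obtain rfl : u = c := ((starGraph_adj.mp (R.adj_sub hu)).2.resolve_left hvc)
  exact hu

lemma connected_induce_starGraph {c : V} {s : Set V} (hc : c ∈ s) :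
    ((⊤ : (starGraph c).Subgraph).induce s).Connected := by
  rw [← connected_induce_iff]
  refine Connected.of_isUniversal (v := ⟨c, hc⟩) fun w hw => ?_
  exact starGraph_center_adj fun h => hw (Subtype.ext h)

variable [Fintype V] [DecidableEq V]

lemma sum_le_subgraphWeight_starGraph {c : V} {f : V → ℝ} (hc : f c = 0) (hf : ∀ v, 0 ≤ f v)
    {J : Finset V} (hJ : 1 < #J) {R : (starGraph c).Subgraph} (hR : R.Connected)
    (hJR : ↑J ⊆ R.verts) : ∑ v ∈ J, f v ≤ subgraphWeight (endpointSum f) R := by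
  have hnt : R.verts.Nontrivial := (one_lt_card_iff_nontrivial.mp hJ).coe.mono hJR
  have hspokes : (J.erase c).image (fun v => s(c, v)) ⊆ (Set.toFinite R.edgeSet).toFinset := by
    simp only [image_subset_iff, mem_erase, Set.Finite.mem_toFinset,
      Subgraph.mem_edgeSet]
    rintro v ⟨hvc, hv⟩
    exact (hR.preconnected.adj_starGraph_center hnt (hJR hv) hvc).symm
  calc ∑ v ∈ J, f v
      = ∑ e ∈ (J.erase c).image (fun v => s(c, v)), endpointSum f e := by
        rw [sum_image fun _ _ _ _ h => Sym2.congr_right.mp h, ← sum_erase J hc]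
        simp [hc]
    _ ≤ subgraphWeight (endpointSum f) R :=
        sum_le_sum_of_subset_of_nonneg hspokes fun e _ _ => endpointSum_nonneg hf e

lemma subgraphWeight_induce_starGraph_le {c : V} {f : V → ℝ} (hc : f c = 0)
    (hf : ∀ v, 0 ≤ f v) (J : Finset V) :
    subgraphWeight (endpointSum f) ((⊤ : (starGraph c).Subgraph).induce (insert c ↑J)) ≤
      ∑ v ∈ J, f v := by
  have hspokes :
      (Set.toFinite ((⊤ : (starGraph c).Subgraph).induce (insert c ↑J)).edgeSet).toFinset ⊆
        J.image (fun v => s(c, v)) := by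
    intro e he
    induction e using Sym2.ind with
    | _ a b =>
      simp only [Set.Finite.mem_toFinset, Subgraph.mem_edgeSet, Subgraph.induce_adj,
        Subgraph.top_adj, starGraph_adj, Set.mem_insert_iff, mem_coe] at he
      simp only [mem_image]
      obtain ⟨ha, hb, hab, rfl | rfl⟩ := he
      · exact ⟨b, hb.resolve_left hab.symm, rfl⟩
      · exact ⟨a, ha.resolve_left hab, Sym2.eq_swap⟩
  calc subgraphWeight (endpointSum f) ((⊤ : (starGraph c).Subgraph).induce (insert c ↑J))
      ≤ ∑ e ∈ J.image (fun v => s(c, v)), endpointSum f e :=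
        sum_le_sum_of_subset_of_nonneg hspokes fun e _ _ => endpointSum_nonneg hf e
    _ = ∑ v ∈ J, f v := by
        rw [sum_image fun _ _ _ _ h => Sym2.congr_right.mp h]
        simp [hc]

lemma graphDist_starGraph {c : V} {f : V → ℝ} (hc : f c = 0) (hf : ∀ v, 0 ≤ f v)
    {J : Finset V} (hJ : 1 < #J) :
    graphDist (starGraph c) (endpointSum f) ↑J = ∑ v ∈ J, f v := by
  refine IsLeast.csInf_eq ⟨⟨_, connected_induce_starGraph (Set.mem_insert c _),
    Set.subset_insert c _, le_antisymm (subgraphWeight_induce_starGraph_le hc hf J) ?_⟩, ?_⟩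
  · exact sum_le_subgraphWeight_starGraph hc hf hJ
      (connected_induce_starGraph (Set.mem_insert c _)) (Set.subset_insert c _)
  · rintro x ⟨R, hR, hJR, rfl⟩
    exact sum_le_subgraphWeight_starGraph hc hf hJ hR hJR

end SimpleGraph

section LeafWeight

variable {n : ℕ} (D : Fin n → ℝ)

noncomputable def leafWeight (j : Fin n) : ℝ := (∑ k, D k) / ((n : ℝ) - 1) - D j

variable {D}

lemma sub_one_mul_leafWeight (hn : 1 < n) (j : Fin n) :
    ((n : ℝ) - 1) * leafWeight D j = ∑ k ∈ univ.erase j, D k - ((n : ℝ) - 2) * D j := by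
  have hn' : (n : ℝ) - 1 ≠ 0 := sub_ne_zero.mpr (by exact_mod_cast hn.ne')
  rw [leafWeight, sum_erase_eq_sub (mem_univ j), mul_sub, mul_div_cancel₀ _ hn']
  ring

lemma leafWeight_nonneg_iff (hn : 1 < n) (j : Fin n) :
    0 ≤ leafWeight D j ↔ ((n : ℝ) - 2) * D j ≤ ∑ k ∈ univ.erase j, D k := by
  have hn' : (0 : ℝ) < (n : ℝ) - 1 := sub_pos.mpr (by exact_mod_cast hn)
  rw [← mul_nonneg_iff_of_pos_left hn', sub_one_mul_leafWeight hn, sub_nonneg]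

lemma leafWeight_eq_zero_iff (hn : 1 < n) (j : Fin n) :
    leafWeight D j = 0 ↔ ((n : ℝ) - 2) * D j = ∑ k ∈ univ.erase j, D k := by
  have hn' : (n : ℝ) - 1 ≠ 0 := sub_ne_zero.mpr (by exact_mod_cast hn.ne')
  rw [← mul_eq_zero_iff_left hn', sub_one_mul_leafWeight hn, sub_eq_zero, eq_comm]

lemma sum_erase_leafWeight (hn : 1 < n) (i : Fin n) :
    ∑ j ∈ univ.erase i, leafWeight D j = D i := by
  have hn' : (n : ℝ) - 1 ≠ 0 := sub_ne_zero.mpr (by exact_mod_cast hn.ne')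
  unfold leafWeight
  rw [sum_sub_distrib, sum_const, card_erase_of_mem (mem_univ i),
    card_univ, Fintype.card_fin, nsmul_eq_mul, Nat.cast_pred (by omega),
    sum_erase_eq_sub (mem_univ i), mul_div_cancel₀ _ hn']
  ring

end LeafWeight

def TreeRealizable {n : ℕ} (D : Fin n → ℝ) : Prop :=
  ∃ (V : Type) (inst : Fintype V) (T : SimpleGraph V) (w : Sym2 V → ℝ)
    (ι : Fin n → V), T.IsTree ∧ PosWeighted T w ∧ Function.Injective ι ∧
    n ≤ @Fintype.card V inst ∧
    ∀ i : Fin n, @graphDist V inst T w (ι '' {j | j ≠ i}) = D i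

lemma treeRealizable_of_starGraph {n : ℕ} (hn : 3 ≤ n) {D : Fin n → ℝ} {V : Type} [Fintype V]
    [DecidableEq V] (c : V) (f : V → ℝ) (hc : f c = 0) (hf : ∀ v, v ≠ c → 0 < f v)
    (ι : Fin n → V) (hι : Function.Injective ι) (hD : ∀ i, ∑ j ∈ univ.erase i, f (ι j) = D i) :
    TreeRealizable D := by
  have hf₀ : ∀ v, 0 ≤ f v := fun v => by
    rcases eq_or_ne v c with rfl | hv
    exacts [hc.ge, (hf v hv).le]
  refine ⟨V, ‹_›, starGraph c, endpointSum f, ι, isTree_starGraph c,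
    posWeighted_starGraph_endpointSum hc hf, hι,
    by simpa using Fintype.card_le_of_injective ι hι, fun i => ?_⟩
  have hJ : ι '' {j | j ≠ i} = ↑((univ.erase i).image ι) := by ext; simp
  have hcard : 1 < #((univ.erase i).image ι) := by
    rw [card_image_of_injective _ hι, card_erase_of_mem (mem_univ i), card_univ,
      Fintype.card_fin]
    omega
  rw [hJ, graphDist_starGraph hc hf₀ hcard, sum_image hι.injOn, hD]

theorem tree_vertices_exists_general {n : ℕ} (hn : 3 ≤ n) (D : Fin n → ℝ)
    (hineq : ∀ i : Fin n, ((n : ℝ) - 2) * D i ≤ ∑ j ∈ Finset.univ.erase i, D j)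
    (huniq : ∀ i i' : Fin n,
      ((n : ℝ) - 2) * D i = ∑ j ∈ Finset.univ.erase i, D j →
      ((n : ℝ) - 2) * D i' = ∑ j ∈ Finset.univ.erase i', D j → i = i') :
    ∃ (V : Type) (inst : Fintype V) (T : SimpleGraph V) (w : Sym2 V → ℝ)
      (ι : Fin n → V), T.IsTree ∧ PosWeighted T w ∧ Function.Injective ι ∧
      n ≤ @Fintype.card V inst ∧
      ∀ i : Fin n, @graphDist V inst T w (ι '' {j | j ≠ i}) = D i := by
  have hn₁ : 1 < n := by omega
  have hr₀ : ∀ j, 0 ≤ leafWeight D j := fun j => (leafWeight_nonneg_iff hn₁ j).mpr (hineq j)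
  by_cases hzero : ∃ i₀, leafWeight D i₀ = 0
  · obtain ⟨i₀, hi₀⟩ := hzero
    refine treeRealizable_of_starGraph hn i₀ (leafWeight D) hi₀ (fun j hj => ?_) id
      Function.injective_id (sum_erase_leafWeight hn₁)
    refine (hr₀ j).lt_of_ne' fun hj₀ => hj ?_
    exact huniq j i₀ ((leafWeight_eq_zero_iff hn₁ j).mp hj₀)
      ((leafWeight_eq_zero_iff hn₁ i₀).mp hi₀)
  · push Not at hzero
    refine treeRealizable_of_starGraph hn none (Option.elim · 0 (leafWeight D)) rfl ?_ some
      (Option.some_injective _) (sum_erase_leafWeight hn₁)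
    rintro (_ | j) hj
    exacts [absurd rfl hj, (hr₀ j).lt_of_ne' (hzero j)]

/-- Theorem 3.2(a), sufficiency: a family of positive reals satisfying the
inequalities, with at most one equality, is realized by a positive-weighted
tree with at least `n` vertices `1,…,n`. -/
theorem tree_vertices_exists {n : ℕ} (hn : 3 ≤ n) (D : Fin n → ℝ)
    (hD : ∀ i, 0 < D i)
    (hineq : ∀ i : Fin n, ((n : ℝ) - 2) * D i ≤ ∑ j ∈ Finset.univ.erase i, D j)
    (huniq : ∀ i i' : Fin n,
      ((n : ℝ) - 2) * D i = ∑ j ∈ Finset.univ.erase i, D j →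
      ((n : ℝ) - 2) * D i' = ∑ j ∈ Finset.univ.erase i', D j → i = i') :
    ∃ (V : Type) (inst : Fintype V) (T : SimpleGraph V) (w : Sym2 V → ℝ)
      (ι : Fin n → V), T.IsTree ∧ PosWeighted T w ∧ Function.Injective ι ∧
      n ≤ @Fintype.card V inst ∧
      ∀ i : Fin n, @graphDist V inst T w (ι '' {j | j ≠ i}) = D i :=
  tree_vertices_exists_general hn D hineq huniq
end

section
/- Let n ∈ ℕ with n ≥ 3 and let {D_{î}}_{i ∈ [n]} be a family of positive real numbers such that for every i ∈ [n] one has the strict inequality (n−2)·D_{î} < Σ_{j ∈ [n]∖{i}} D_{ĵ}. Then there exists a positive-weighted tree 𝒯=(T,w) with at least n leaves, with distinct leaves 1,…,n, such that D_{[n]∖{i}}(𝒯) = D_{î} for every i ∈ [n]. -/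
open SimpleGraph Finset

/-- A leaf of a graph is a vertex of degree 1. -/
def IsLeaf {V : Type} (G : SimpleGraph V) (v : V) : Prop :=
  (G.neighborSet v).ncard = 1

/-!
Realize the family by a star: leaves `1, …, n` around a centre, the edge to leaf `j` weighted
`c j = S - D j` with `S = (∑ₖ D k) / (n - 1)`. The hypothesis on `D i` says exactly that `c i > 0`.
A connected subgraph containing at least two leaves of a star contains the edge of each of them,
so the cheapest one containing all leaves but `i` is the substar on them, of weight
`∑_{j ≠ i} (S - D j) = (n - 1) S - (∑ₖ D k - D i) = D i`.
-/

namespace SimpleGraph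

variable {V : Type}

lemma neighborSet_starGraph_of_ne {r v : V} (h : v ≠ r) :
    (starGraph r).neighborSet v = {r} := by
  ext x
  simp only [mem_neighborSet, starGraph_adj, Set.mem_singleton_iff]
  grind

lemma isLeaf_starGraph_of_ne {r v : V} (h : v ≠ r) : IsLeaf (starGraph r) v := by
  rw [IsLeaf, neighborSet_starGraph_of_ne h, Set.ncard_singleton]

lemma mem_edgeSet_starGraph {r : V} {e : Sym2 V} :
    e ∈ (starGraph r).edgeSet ↔ ∃ v ≠ r, s(v, r) = e := by
  induction e using Sym2.ind with
  | _ a b =>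
    constructor
    · rintro ⟨hab, rfl | rfl⟩
      · exact ⟨b, Ne.symm hab, Sym2.eq_swap⟩
      · exact ⟨a, hab, rfl⟩
    · rintro ⟨v, hv, h⟩
      rw [← h]
      simp [hv]

/-- A walk in `R` leaving `v` towards `x` has nowhere to go but `u`. -/
lemma Subgraph.Connected.adj_of_neighborSet_eq_singleton {G : SimpleGraph V} {R : G.Subgraph}
    (hR : R.Connected) {u v x : V} (hv : G.neighborSet v = {u}) (hvR : v ∈ R.verts)
    (hxR : x ∈ R.verts) (hxv : x ≠ v) : R.Adj v u := by
  obtain ⟨p⟩ := hR.preconnected.coe ⟨v, hvR⟩ ⟨x, hxR⟩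
  have hp : ¬ p.Nil := Walk.not_nil_of_ne fun h => hxv (congrArg Subtype.val h).symm
  have hadj : R.Adj v (p.getVert 1) := p.adj_snd hp
  have hu : (p.getVert 1 : V) = u := by
    simpa [← Set.mem_singleton_iff, ← hv] using R.adj_sub hadj
  rwa [hu] at hadj

end SimpleGraph

section Weights

variable {V : Type} [Fintype V] {G : SimpleGraph V} {w : Sym2 V → ℝ}

lemma sum_le_subgraphWeight {R : G.Subgraph} (hw : ∀ e ∈ R.edgeSet, 0 ≤ w e)
    {F : Finset (Sym2 V)} (hF : ↑F ⊆ R.edgeSet) : ∑ e ∈ F, w e ≤ subgraphWeight w R :=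
  Finset.sum_le_sum_of_subset_of_nonneg (fun e he => by simpa using hF he)
    fun e he _ => hw e (by simpa using he)

lemma subgraphWeight_le_sum {R : G.Subgraph} {F : Finset (Sym2 V)} (hw : ∀ e ∈ F, 0 ≤ w e)
    (hF : R.edgeSet ⊆ ↑F) : subgraphWeight w R ≤ ∑ e ∈ F, w e :=
  Finset.sum_le_sum_of_subset_of_nonneg (fun e he => hF (by simpa using he))
    fun e he _ => hw e he

lemma graphDist_eq_of_forall_le {I : Set V} {x : ℝ} (R : G.Subgraph) (hR : R.Connected)
    (hI : I ⊆ R.verts) (hRx : subgraphWeight w R ≤ x)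
    (hx : ∀ R' : G.Subgraph, R'.Connected → I ⊆ R'.verts → x ≤ subgraphWeight w R') :
    graphDist G w I = x := by
  have hRx' : subgraphWeight w R = x := le_antisymm hRx (hx R hR hI)
  exact IsLeast.csInf_eq ⟨⟨R, hR, hI, hRx'⟩, by rintro _ ⟨R', hR', hI', rfl⟩; exact hx R' hR' hI'⟩

end Weights

section Star

open SimpleGraph

variable {ι : Type}

/-- The edge from the centre `none` to the leaf `some j` gets weight `c j`, written as the sum of
the potentials `Option.elim 0 c` of its endpoints. -/
def starWeight (c : ι → ℝ) : Sym2 (Option ι) → ℝ :=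
  Sym2.lift ⟨fun a b => a.elim 0 c + b.elim 0 c, fun _ _ => add_comm _ _⟩

@[simp]
lemma starWeight_mk_some_none (c : ι → ℝ) (j : ι) : starWeight c s(some j, none) = c j := by
  simp [starWeight]

lemma starWeight_of_mem_edgeSet (c : ι → ℝ) {e : Sym2 (Option ι)}
    (he : e ∈ (starGraph none).edgeSet) : ∃ j, starWeight c e = c j := by
  obtain ⟨v, hv, rfl⟩ := mem_edgeSet_starGraph.1 he
  obtain ⟨j, rfl⟩ := Option.ne_none_iff_exists'.1 hv
  exact ⟨j, starWeight_mk_some_none c j⟩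

lemma starWeight_nonneg {c : ι → ℝ} (hc : ∀ j, 0 ≤ c j) (e : Sym2 (Option ι)) :
    0 ≤ starWeight c e := by
  induction e using Sym2.ind with
  | _ a b => cases a <;> cases b <;> simp [starWeight, hc, add_nonneg]

lemma posWeighted_starWeight {c : ι → ℝ} (hc : ∀ j, 0 < c j) :
    PosWeighted (starGraph none) (starWeight c) := fun e he => by
  obtain ⟨j, hj⟩ := starWeight_of_mem_edgeSet c he
  exact hj ▸ hc j

lemma card_le_ncard_isLeaf_starGraph [Finite ι] :
    Nat.card ι ≤ {v | IsLeaf (starGraph (none : Option ι)) v}.ncard := by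
  have hsub : Set.range (some : ι → Option ι) ⊆ {v | IsLeaf (starGraph none) v} := by
    rintro _ ⟨j, rfl⟩
    exact isLeaf_starGraph_of_ne (Option.some_ne_none j)
  calc Nat.card ι = (Set.range (some : ι → Option ι)).ncard := by
        rw [← Set.image_univ, Set.ncard_image_of_injective _ (Option.some_injective ι),
          Set.ncard_univ]
    _ ≤ _ := Set.ncard_le_ncard hsub

def leafSubstar (J : Finset ι) : (starGraph (none : Option ι)).Subgraph :=
  (⊤ : (starGraph none).Subgraph).induce (insert none (some '' ↑J))

lemma leafSubstar_connected (J : Finset ι) : (leafSubstar J).Connected := by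
  rw [Subgraph.connected_iff']
  refine Connected.of_isUniversal (v := ⟨none, Set.mem_insert _ _⟩) fun ⟨x, hx⟩ hne => ?_
  simp only [Subgraph.coe_adj, leafSubstar, Subgraph.induce_adj, Subgraph.top_adj,
    starGraph_adj]
  exact ⟨Set.mem_insert _ _, hx, fun h => hne (Subtype.ext h), Or.inl trivial⟩

variable [DecidableEq ι]

def leafEdges (J : Finset ι) : Finset (Sym2 (Option ι)) :=
  J.image fun j => s(some j, none)

lemma sum_leafEdges_starWeight (c : ι → ℝ) (J : Finset ι) :
    ∑ e ∈ leafEdges J, starWeight c e = ∑ j ∈ J, c j := by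
  rw [leafEdges, Finset.sum_image fun a _ b _ h => by simpa using h]
  simp

lemma leafEdges_subset_edgeSet {J : Finset ι} (hJ : 2 ≤ J.card)
    {R : (starGraph (none : Option ι)).Subgraph} (hR : R.Connected)
    (hJR : some '' ↑J ⊆ R.verts) : ↑(leafEdges J) ⊆ R.edgeSet := by
  intro e he
  obtain ⟨j, hj, rfl⟩ := Finset.mem_image.1 (Finset.mem_coe.1 he)
  obtain ⟨k, hk, hkj⟩ := Finset.exists_mem_ne hJ j
  exact hR.adj_of_neighborSet_eq_singleton
    (neighborSet_starGraph_of_ne (Option.some_ne_none j)) (hJR ⟨j, hj, rfl⟩)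
    (hJR ⟨k, hk, rfl⟩) (Option.some_injective ι |>.ne hkj)

lemma edgeSet_leafSubstar_subset (J : Finset ι) :
    (leafSubstar J).edgeSet ⊆ ↑(leafEdges J) := by
  intro e he
  induction e using Sym2.ind with
  | _ a b =>
    simp only [Subgraph.mem_edgeSet, leafSubstar, Subgraph.induce_adj, Subgraph.top_adj,
      starGraph_adj] at he
    simp only [leafEdges, Finset.coe_image, Set.mem_image, Finset.mem_coe, Sym2.eq_iff]
    grind

theorem graphDist_starGraph [Fintype ι] {c : ι → ℝ} (hc : ∀ j, 0 ≤ c j) {J : Finset ι}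
    (hJ : 2 ≤ J.card) :
    graphDist (starGraph none) (starWeight c) (some '' ↑J) = ∑ j ∈ J, c j := by
  rw [← sum_leafEdges_starWeight]
  refine graphDist_eq_of_forall_le (leafSubstar J) (leafSubstar_connected J)
    (fun v hv => Set.mem_insert_of_mem _ hv) ?_ fun R hR hJR => ?_
  · exact subgraphWeight_le_sum (fun e _ => starWeight_nonneg hc e)
      (edgeSet_leafSubstar_subset J)
  · exact sum_le_subgraphWeight (fun e _ => starWeight_nonneg hc e)
      (leafEdges_subset_edgeSet hJ hR hJR)

end Star

section Arithmetic

variable {ι : Type} [Fintype ι] [DecidableEq ι] (D : ι → ℝ) (i : ι)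

lemma lt_sum_div_card_sub_one (hι : 2 ≤ Fintype.card ι)
    (h : ((Fintype.card ι : ℝ) - 2) * D i < ∑ j ∈ univ.erase i, D j) :
    D i < (∑ j, D j) / (Fintype.card ι - 1) := by
  have hι' : (2 : ℝ) ≤ Fintype.card ι := by exact_mod_cast hι
  rw [sum_erase_eq_sub (mem_univ i)] at h
  rw [lt_div_iff₀ (by linarith)]
  linarith

lemma sum_erase_sub_sum_div_card_sub_one (hι : 2 ≤ Fintype.card ι) :
    ∑ j ∈ univ.erase i, ((∑ k, D k) / (Fintype.card ι - 1) - D j) = D i := by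
  have hι' : (Fintype.card ι : ℝ) - 1 ≠ 0 := by
    have : (2 : ℝ) ≤ Fintype.card ι := by exact_mod_cast hι
    linarith
  rw [sum_sub_distrib, sum_const, card_erase_of_mem (mem_univ i), card_univ, nsmul_eq_mul,
    Nat.cast_sub (by omega), Nat.cast_one, mul_div_cancel₀ _ hι', sum_erase_eq_sub (mem_univ i)]
  ring

end Arithmetic

theorem tree_leaves_exists_general {n : ℕ} (hn : 3 ≤ n) (D : Fin n → ℝ)
    (hineq : ∀ i : Fin n, ((n : ℝ) - 2) * D i < ∑ j ∈ Finset.univ.erase i, D j) :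
    ∃ (V : Type) (inst : Fintype V) (T : SimpleGraph V) (w : Sym2 V → ℝ)
      (ι : Fin n → V), T.IsTree ∧ PosWeighted T w ∧ Function.Injective ι ∧
      (∀ i : Fin n, IsLeaf T (ι i)) ∧ n ≤ {v : V | IsLeaf T v}.ncard ∧
      ∀ i : Fin n, @graphDist V inst T w (ι '' {j | j ≠ i}) = D i := by
  have hcard : 2 ≤ Fintype.card (Fin n) := by rw [Fintype.card_fin]; omega
  set c : Fin n → ℝ := fun j => (∑ k, D k) / (Fintype.card (Fin n) - 1) - D j
  have hc : ∀ j, 0 < c j := fun j =>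
    sub_pos.2 (lt_sum_div_card_sub_one D j hcard (by simpa using hineq j))
  refine ⟨Option (Fin n), inferInstance, starGraph none, starWeight c, some,
    isTree_starGraph none, posWeighted_starWeight hc, Option.some_injective _,
    fun i => isLeaf_starGraph_of_ne (Option.some_ne_none i), ?_, fun i => ?_⟩
  · simpa using card_le_ncard_isLeaf_starGraph (ι := Fin n)
  · have hJ : 2 ≤ (univ.erase i).card := by
      rw [card_erase_of_mem (mem_univ i), card_univ, Fintype.card_fin]; omega
    have hI : {j | j ≠ i} = ↑(univ.erase i) := by ext; simp
    rw [hI, graphDist_starGraph (fun j => (hc j).le) hJ]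
    exact sum_erase_sub_sum_div_card_sub_one D i hcard

/-- Theorem 3.2(b), sufficiency: a family of positive reals satisfying the
strict inequalities is realized by a positive-weighted tree with at least `n`
leaves, with `1,…,n` among its leaves. -/
theorem tree_leaves_exists {n : ℕ} (hn : 3 ≤ n) (D : Fin n → ℝ)
    (hD : ∀ i, 0 < D i)
    (hineq : ∀ i : Fin n, ((n : ℝ) - 2) * D i < ∑ j ∈ Finset.univ.erase i, D j) :
    ∃ (V : Type) (inst : Fintype V) (T : SimpleGraph V) (w : Sym2 V → ℝ)
      (ι : Fin n → V), T.IsTree ∧ PosWeighted T w ∧ Function.Injective ι ∧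
      (∀ i : Fin n, IsLeaf T (ι i)) ∧ n ≤ {v : V | IsLeaf T v}.ncard ∧
      ∀ i : Fin n, @graphDist V inst T w (ι '' {j | j ≠ i}) = D i :=
  tree_leaves_exists_general hn D hineq
end

section
/- Let n ∈ ℕ with n ≥ 3, let 𝒯=(T,w) be a positive-weighted tree with exactly n vertices, labelled 1,…,n, and define D_{î} = D_{[n]∖{i}}(𝒯) for each i ∈ [n]. Then: (i) for every i ∈ [n], (n−2)·D_{î} ≤ Σ_{j ∈ [n]∖{i}} D_{ĵ}, and at most one of these n inequalities is an equality; (ii) either one of these inequalities is an equality, or the maximum of {D_{î}}_{i ∈ [n]} is achieved by at least two indices; (iii) the maximum of {D_{î}}_{i ∈ [n]} is achieved by at most n−2 indices. -/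
open SimpleGraph Finset

/-- `Dhat G w i` is the `(n-1)`-weight `D_{[n]∖{i}}(𝒢)` for a graph on vertex
set `Fin n`. -/
noncomputable def Dhat {n : ℕ} (G : SimpleGraph (Fin n)) (w : Sym2 (Fin n) → ℝ)
    (i : Fin n) : ℝ :=
  graphDist G w {j | j ≠ i}

/-!
A connected subgraph of a tree is induced by its vertex set, since the path joining two of
its vertices is unique. So the only competitors for `D_î` are the whole tree and, when `i`
is a leaf, the tree with `i` deleted: `D_î = W - ℓ_i`, where `W` is the total weight and
`ℓ_i` the weight of the pendant edge at `i` (zero if `i` is not a leaf). With `L = ∑ ℓ_j`,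
the gap in the `i`-th inequality is `(W - L) + (n - 1) ℓ_i`. For `n ≥ 3` no two leaves are
adjacent, so `L` is the weight of the edges meeting a leaf; hence `L ≤ W`, with `L < W` as
soon as two vertices are not leaves. Equality thus holds only at the centre of a star;
otherwise the maximum `W` of `D` is attained at two non-leaves. The maximisers are exactly
the non-leaves, and a tree has at least two leaves.
-/

namespace SimpleGraph

section Acyclic

variable {V : Type*} {G : SimpleGraph V}

theorem IsAcyclic.toSubgraph_le_of_isPath (hG : G.IsAcyclic) {H : G.Subgraph}
    (hH : H.Connected) {u v : V} (hu : u ∈ H.verts) (hv : v ∈ H.verts) {p : G.Walk u v}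
    (hp : p.IsPath) : p.toSubgraph ≤ H := by
  classical
  obtain ⟨q, hq⟩ := ((Subgraph.connected_iff_forall_exists_walk_subgraph H).1 hH).2 hu hv
  obtain rfl : p = q.bypass :=
    congrArg Subtype.val
      ((hG.subsingleton_path u v).elim ⟨p, hp⟩ ⟨q.bypass, q.bypass_isPath⟩)
  exact Walk.toSubgraph_bypass_le_toSubgraph.trans hq

theorem IsAcyclic.isInduced_of_connected (hG : G.IsAcyclic) {H : G.Subgraph}
    (hH : H.Connected) : H.IsInduced := fun u hu v hv huv =>
  (hG.toSubgraph_le_of_isPath hH hu hv huv.isPath_toWalk).2 (by simp)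

theorem IsAcyclic.mem_verts_of_adj_of_adj (hG : G.IsAcyclic) {H : G.Subgraph}
    (hH : H.Connected) {x i y : V} (hxi : G.Adj x i) (hiy : G.Adj i y) (hxy : x ≠ y)
    (hx : x ∈ H.verts) (hy : y ∈ H.verts) : i ∈ H.verts := by
  have hp : (Walk.cons hxi (Walk.cons hiy .nil)).IsPath := by
    simp [hxi.ne, hiy.ne, hxy]
  exact (hG.toSubgraph_le_of_isPath hH hx hy hp).1 (by simp)

end Acyclic

variable {V : Type} {G : SimpleGraph V}

section Degree

variable [Fintype V] [DecidableRel G.Adj]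

theorem subsingleton_neighborSet_of_degree_eq_one {v : V} (h : G.degree v = 1) :
    (G.neighborSet v).Subsingleton := by
  obtain ⟨x, -, hx⟩ := degree_eq_one_iff_existsUnique_adj.mp h
  exact fun a ha b hb => (hx a ha).trans (hx b hb).symm

theorem Preconnected.exists_adj_of_degree_ne_one (hG : G.Preconnected) {u v : V} (huv : u ≠ v)
    (hu : G.degree u ≠ 1) (hv : G.degree v ≠ 1) :
    ∃ x y, G.Adj x y ∧ G.degree x ≠ 1 ∧ G.degree y ≠ 1 := by
  obtain ⟨p, hp⟩ := hG.exists_isPath u v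
  have hnil : ¬ p.Nil := Walk.not_nil_of_ne huv
  refine ⟨u, p.snd, p.adj_snd hnil, hu, fun hx => ?_⟩
  by_cases hxv : p.snd = v
  · exact hv (hxv ▸ hx)
  · exact hp.isTrail.not_mem_support_of_subsingleton_neighborSet (p.adj_snd hnil).ne' hxv
      (subsingleton_neighborSet_of_degree_eq_one hx) (p.getVert_mem_support 1)

theorem Connected.not_adj_of_degree_eq_one (hG : G.Connected) (hV : 3 ≤ Fintype.card V)
    {j k : V} (hj : G.degree j = 1) (hk : G.degree k = 1) : ¬ G.Adj j k := by
  classical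
  intro hjk
  obtain ⟨m, -, hm⟩ : ∃ m ∈ univ, m ∉ ({j, k} : Finset V) :=
    exists_mem_notMem_of_card_lt_card (card_le_two.trans_lt (by rw [card_univ]; omega))
  rw [mem_insert, mem_singleton, not_or] at hm
  obtain ⟨p, hp⟩ := hG.exists_isPath m j
  have hnil : ¬ p.Nil := Walk.not_nil_of_ne hm.1
  have hpen : p.penultimate = k :=
    subsingleton_neighborSet_of_degree_eq_one hj (p.adj_penultimate hnil).symm hjk
  exact hp.isTrail.not_mem_support_of_subsingleton_neighborSet (Ne.symm hm.2) hjk.ne'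
    (subsingleton_neighborSet_of_degree_eq_one hk) (hpen ▸ p.getVert_mem_support _)

theorem Connected.exists_degree_ne_one (hG : G.Connected) (hV : 3 ≤ Fintype.card V) :
    ∃ c, G.degree c ≠ 1 := by
  obtain ⟨j⟩ := hG.nonempty
  by_cases hj : G.degree j = 1
  · obtain ⟨x, hx, -⟩ := degree_eq_one_iff_existsUnique_adj.mp hj
    exact ⟨x, fun hx1 => hG.not_adj_of_degree_eq_one hV hj hx1 hx⟩
  · exact ⟨j, hj⟩

theorem IsTree.card_degree_ne_one_le [Nontrivial V] (hG : G.IsTree) :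
    #{v | G.degree v ≠ 1} ≤ Fintype.card V - 2 := by
  classical
  obtain ⟨u, v, huv, hu, hv⟩ := hG.exists_ne_and_degree_eq_one
  calc #{v | G.degree v ≠ 1} ≤ #({u, v}ᶜ : Finset V) :=
        card_le_card fun x hx => by grind [mem_compl]
    _ = Fintype.card V - 2 := by rw [card_compl, card_pair huv]

theorem IsTree.degree_eq_one_of_notMem_verts [Nontrivial V] (hG : G.IsTree) {R : G.Subgraph}
    (hR : R.Connected) {i : V} (hsub : {i}ᶜ ⊆ R.verts) (hi : i ∉ R.verts) :
    G.degree i = 1 := by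
  by_contra h1
  have h2 : 1 < #(G.neighborFinset i) := by
    have := hG.connected.preconnected.degree_pos_of_nontrivial i
    rw [card_neighborFinset_eq_degree]
    omega
  obtain ⟨x, hx, y, hy, hxy⟩ := one_lt_card.mp h2
  rw [mem_neighborFinset] at hx hy
  exact hi (hG.isAcyclic.mem_verts_of_adj_of_adj hR hx.symm hy hxy (hsub hx.ne') (hsub hy.ne'))

end Degree

section PendantWeight

variable [Fintype V] [DecidableEq V] [DecidableRel G.Adj] {w : Sym2 V → ℝ}

variable (G w) in
noncomputable def pendantWeight (v : V) : ℝ :=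
  if G.degree v = 1 then ∑ e ∈ G.incidenceFinset v, w e else 0

variable (G) in
noncomputable def pendantEdges : Finset (Sym2 V) :=
  {e ∈ G.edgeFinset | ∃ v ∈ e, G.degree v = 1}

theorem pendantWeight_nonneg (hw : PosWeighted G w) (v : V) : 0 ≤ pendantWeight G w v := by
  unfold pendantWeight
  split_ifs
  · exact sum_nonneg fun e he => (hw e (G.incidenceSet_subset v (by simpa using he))).le
  · rfl

theorem pendantWeight_pos (hw : PosWeighted G w) {v : V} (hv : G.degree v = 1) :
    0 < pendantWeight G w v := by
  rw [pendantWeight, if_pos hv]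
  refine sum_pos (fun e he => hw e (G.incidenceSet_subset v (by simpa using he))) ?_
  rw [← card_pos, card_incidenceFinset_eq_degree, hv]
  exact one_pos

theorem pendantWeight_eq_zero {v : V} (hv : G.degree v ≠ 1) : pendantWeight G w v = 0 :=
  if_neg hv

theorem Connected.sum_pendantWeight (hG : G.Connected) (hV : 3 ≤ Fintype.card V) :
    ∑ v, pendantWeight G w v = ∑ e ∈ G.pendantEdges, w e := by
  have hdisj : (({v | G.degree v = 1} : Finset V) : Set V).PairwiseDisjoint
      (G.incidenceFinset ·) := by
    intro j hj k hk hjk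
    simp only [coe_filter, mem_univ, true_and, Set.mem_ofPred_eq] at hj hk
    rw [Function.onFun, Finset.disjoint_left]
    refine fun e hej hek => hG.not_adj_of_degree_eq_one hV hj hk ?_
    exact G.adj_of_mem_incidenceSet hjk (by simpa using hej) (by simpa using hek)
  have hunion :
      ({v | G.degree v = 1} : Finset V).biUnion (G.incidenceFinset ·) = G.pendantEdges := by
    ext e
    simp only [mem_biUnion, mem_filter, mem_univ, true_and, pendantEdges,
      incidenceFinset_eq_filter]
    grind
  rw [← hunion, sum_biUnion hdisj, sum_filter]
  rfl

theorem Connected.sum_pendantWeight_le (hG : G.Connected) (hV : 3 ≤ Fintype.card V)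
    (hw : PosWeighted G w) : ∑ v, pendantWeight G w v ≤ ∑ e ∈ G.edgeFinset, w e := by
  rw [hG.sum_pendantWeight hV]
  exact sum_le_sum_of_subset_of_nonneg (filter_subset _ _)
    fun e he _ => (hw e (mem_edgeFinset.mp he)).le

theorem Connected.sum_pendantWeight_lt (hG : G.Connected) (hV : 3 ≤ Fintype.card V)
    (hw : PosWeighted G w) {u v : V} (huv : u ≠ v) (hu : G.degree u ≠ 1)
    (hv : G.degree v ≠ 1) : ∑ v, pendantWeight G w v < ∑ e ∈ G.edgeFinset, w e := by
  obtain ⟨x, y, hxy, hx, hy⟩ := hG.preconnected.exists_adj_of_degree_ne_one huv hu hv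
  have hxy : s(x, y) ∈ G.edgeSet := hxy
  rw [hG.sum_pendantWeight hV]
  refine sum_lt_sum_of_subset (filter_subset _ _) (mem_edgeFinset.mpr hxy) ?_ (hw _ hxy)
    fun e he _ => (hw e (mem_edgeFinset.mp he)).le
  simp only [pendantEdges, mem_filter, Sym2.mem_iff]
  grind

theorem Connected.sum_pendantWeight_eq (hG : G.Connected) (hV : 3 ≤ Fintype.card V) {c : V}
    (hc : ∀ v ≠ c, G.degree v = 1) :
    ∑ v, pendantWeight G w v = ∑ e ∈ G.edgeFinset, w e := by
  rw [hG.sum_pendantWeight hV, pendantEdges, filter_true_of_mem]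
  intro e he
  induction e using Sym2.ind with
  | _ x y =>
    by_cases hx : x = c
    · refine ⟨y, Sym2.mem_mk_right x y, hc y fun hy => ?_⟩
      exact (mem_edgeFinset.mp he).ne (hx.trans hy.symm)
    · exact ⟨x, Sym2.mem_mk_left x y, hc x hx⟩

end PendantWeight

section GraphDist

variable [Fintype V] {w : Sym2 V → ℝ}

theorem subgraphWeight_eq_sum {R : G.Subgraph} {s : Finset (Sym2 V)} (h : R.edgeSet = s) :
    subgraphWeight w R = ∑ e ∈ s, w e := by
  unfold subgraphWeight
  congr 1
  ext e
  simp [h]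

variable [DecidableRel G.Adj]

theorem subgraphWeight_top : subgraphWeight w (⊤ : G.Subgraph) = ∑ e ∈ G.edgeFinset, w e :=
  subgraphWeight_eq_sum (by simp)

variable [DecidableEq V]

theorem subgraphWeight_induce_compl_singleton (v : V) :
    subgraphWeight w ((⊤ : G.Subgraph).induce {v}ᶜ) =
      ∑ e ∈ G.edgeFinset, w e - ∑ e ∈ G.incidenceFinset v, w e := by
  rw [← sum_sdiff_eq_sub (G.incidenceFinset_subset v)]
  refine subgraphWeight_eq_sum ?_
  ext e
  induction e using Sym2.ind with
  | _ a b =>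
    simp only [Subgraph.mem_edgeSet, Subgraph.induce_adj, coe_sdiff, Set.mem_sdiff,
      coe_edgeFinset, coe_incidenceFinset, mem_edgeSet, mk'_mem_incidenceSet_iff,
      Set.mem_compl_singleton_iff, Subgraph.top_adj]
    grind

theorem IsTree.graphDist_compl_singleton [Nontrivial V] (hG : G.IsTree) (hw : PosWeighted G w)
    (i : V) : graphDist G w {i}ᶜ = ∑ e ∈ G.edgeFinset, w e - pendantWeight G w i := by
  refine IsLeast.csInf_eq ⟨?_, ?_⟩
  · by_cases hi : G.degree i = 1
    · refine ⟨_, connected_induce_iff.mp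
        (hG.connected.induce_compl_singleton_of_degree_eq_one hi), subset_rfl, ?_⟩
      rw [subgraphWeight_induce_compl_singleton, pendantWeight, if_pos hi]
    · refine ⟨⊤, hG.connected.toSubgraph le_rfl, Set.subset_univ _, ?_⟩
      rw [subgraphWeight_top, pendantWeight_eq_zero hi, sub_zero]
  · rintro _ ⟨R, hR, hsub, rfl⟩
    rw [← (hG.isAcyclic.isInduced_of_connected hR).induce_top_verts]
    by_cases hi : i ∈ R.verts
    · have hR_univ : R.verts = (⊤ : G.Subgraph).verts :=
        Set.eq_univ_of_forall fun j => (em (j = i)).elim (fun hji => hji ▸ hi) (hsub ·)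
      rw [hR_univ, Subgraph.IsInduced.top.induce_top_verts, subgraphWeight_top]
      linarith [pendantWeight_nonneg hw i]
    · have hR_compl : R.verts = {i}ᶜ :=
        subset_antisymm (fun j hj (hji : j = i) => hi (hji ▸ hj)) hsub
      rw [hR_compl, subgraphWeight_induce_compl_singleton, pendantWeight,
        if_pos (hG.degree_eq_one_of_notMem_verts hR hsub hi)]

end GraphDist

end SimpleGraph

theorem sum_erase_sub_mul_eq {n : ℕ} (W : ℝ) (ℓ : Fin n → ℝ) (i : Fin n) :
    ∑ j ∈ univ.erase i, (W - ℓ j) - ((n : ℝ) - 2) * (W - ℓ i) =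
      (W - ∑ j, ℓ j) + ((n : ℝ) - 1) * ℓ i := by
  rw [sum_erase_eq_sub (mem_univ i), sum_sub_distrib, sum_const, card_univ, Fintype.card_fin,
    nsmul_eq_mul]
  ring

namespace SimpleGraph.IsTree

variable {n : ℕ} {T : SimpleGraph (Fin n)} [DecidableRel T.Adj] {w : Sym2 (Fin n) → ℝ}

theorem Dhat_eq (hT : T.IsTree) (hw : PosWeighted T w) (hn : 2 ≤ n) (i : Fin n) :
    Dhat T w i = ∑ e ∈ T.edgeFinset, w e - T.pendantWeight w i :=
  have : Nontrivial (Fin n) := Fin.nontrivial_iff_two_le.mpr hn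
  hT.graphDist_compl_singleton hw i

theorem sum_erase_Dhat_sub_mul_Dhat (hT : T.IsTree) (hw : PosWeighted T w) (hn : 2 ≤ n)
    (i : Fin n) :
    ∑ j ∈ univ.erase i, Dhat T w j - ((n : ℝ) - 2) * Dhat T w i =
      (∑ e ∈ T.edgeFinset, w e - ∑ j, T.pendantWeight w j) +
        ((n : ℝ) - 1) * T.pendantWeight w i := by
  simp_rw [hT.Dhat_eq hw hn]
  exact sum_erase_sub_mul_eq _ _ i

theorem mul_Dhat_le_sum (hT : T.IsTree) (hw : PosWeighted T w) (hn : 3 ≤ n) (i : Fin n) :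
    ((n : ℝ) - 2) * Dhat T w i ≤ ∑ j ∈ univ.erase i, Dhat T w j := by
  have hgap := hT.sum_erase_Dhat_sub_mul_Dhat hw (by omega) i
  have hL := hT.connected.sum_pendantWeight_le (by simpa using hn) hw
  have hn3 : (3 : ℝ) ≤ n := by exact_mod_cast hn
  have hℓ : 0 ≤ ((n : ℝ) - 1) * T.pendantWeight w i :=
    mul_nonneg (by linarith) (pendantWeight_nonneg hw i)
  linarith

theorem mul_Dhat_eq_sum_iff (hT : T.IsTree) (hw : PosWeighted T w) (hn : 3 ≤ n) (i : Fin n) :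
    ((n : ℝ) - 2) * Dhat T w i = ∑ j ∈ univ.erase i, Dhat T w j ↔
      T.degree i ≠ 1 ∧ ∑ j, T.pendantWeight w j = ∑ e ∈ T.edgeFinset, w e := by
  have hgap := hT.sum_erase_Dhat_sub_mul_Dhat hw (by omega) i
  have hL := hT.connected.sum_pendantWeight_le (by simpa using hn) hw
  have hn3 : (3 : ℝ) ≤ n := by exact_mod_cast hn
  have hℓ := pendantWeight_nonneg hw i
  constructor
  · intro heq
    have hℓ0 : T.pendantWeight w i = 0 := by nlinarith
    exact ⟨fun hi => (pendantWeight_pos hw hi).ne' hℓ0, by nlinarith⟩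
  · rintro ⟨hi, hLW⟩
    rw [pendantWeight_eq_zero hi] at hgap
    linarith

theorem forall_Dhat_le_iff (hT : T.IsTree) (hw : PosWeighted T w) (hn : 3 ≤ n) (i : Fin n) :
    (∀ j, Dhat T w j ≤ Dhat T w i) ↔ T.degree i ≠ 1 := by
  simp_rw [hT.Dhat_eq hw (by omega)]
  constructor
  · obtain ⟨c, hc⟩ := hT.connected.exists_degree_ne_one (by simpa using hn)
    intro hmax hi
    have := hmax c
    rw [pendantWeight_eq_zero hc] at this
    linarith [pendantWeight_pos hw hi]
  · intro hi j
    rw [pendantWeight_eq_zero hi]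
    linarith [pendantWeight_nonneg hw j]

end SimpleGraph.IsTree

/-- Theorem 3.3, necessity: the `(n-1)`-weights of a positive-weighted tree
with exactly `n` vertices satisfy (i) the inequalities with at most one
equality, (ii) either one equality or the maximum achieved at least twice,
(iii) the maximum achieved by at most `n-2` indices. -/
theorem tree_exactly_n_vertices_ineq {n : ℕ} (hn : 3 ≤ n)
    (T : SimpleGraph (Fin n)) (w : Sym2 (Fin n) → ℝ)
    (hT : T.IsTree) (hw : PosWeighted T w) :
    ((∀ i : Fin n, ((n : ℝ) - 2) * Dhat T w i ≤ ∑ j ∈ Finset.univ.erase i, Dhat T w j) ∧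
      (∀ i i' : Fin n,
        ((n : ℝ) - 2) * Dhat T w i = ∑ j ∈ Finset.univ.erase i, Dhat T w j →
        ((n : ℝ) - 2) * Dhat T w i' = ∑ j ∈ Finset.univ.erase i', Dhat T w j →
        i = i')) ∧
    ((∃ i : Fin n, ((n : ℝ) - 2) * Dhat T w i = ∑ j ∈ Finset.univ.erase i, Dhat T w j) ∨
      (∃ i j : Fin n, i ≠ j ∧ (∀ k, Dhat T w k ≤ Dhat T w i) ∧ Dhat T w i = Dhat T w j)) ∧
    ({i : Fin n | ∀ j, Dhat T w j ≤ Dhat T w i}.ncard ≤ n - 2) := by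
  classical
  have hV : 3 ≤ Fintype.card (Fin n) := by simpa using hn
  have hmax := hT.forall_Dhat_le_iff hw hn
  have heq := hT.mul_Dhat_eq_sum_iff hw hn
  obtain ⟨c, hc⟩ := hT.connected.exists_degree_ne_one hV
  refine ⟨⟨hT.mul_Dhat_le_sum hw hn, fun i i' hi hi' => ?_⟩, ?_, ?_⟩
  · rw [heq] at hi hi'
    by_contra hne
    exact (hT.connected.sum_pendantWeight_lt hV hw hne hi.1 hi'.1).ne hi.2
  · by_cases h : ∃ j ≠ c, T.degree j ≠ 1
    · obtain ⟨j, hjc, hj⟩ := h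
      exact .inr ⟨c, j, hjc.symm, (hmax c).mpr hc,
        le_antisymm ((hmax j).mpr hj c) ((hmax c).mpr hc j)⟩
    · push Not at h
      exact .inl ⟨c, (heq c).mpr ⟨hc, hT.connected.sum_pendantWeight_eq hV h⟩⟩
  · have : Nontrivial (Fin n) := Fin.nontrivial_iff_two_le.mpr (by omega)
    calc {i | ∀ j, Dhat T w j ≤ Dhat T w i}.ncard = #{i | T.degree i ≠ 1} := by
          rw [← Set.ncard_coe_finset]
          simp_rw [coe_filter, mem_univ, true_and, hmax]
      _ ≤ n - 2 := by simpa using hT.card_degree_ne_one_le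
end

section
/- Let n ∈ ℕ with n ≥ 3, let 𝒢=(G,w) be a connected positive-weighted graph with exactly n vertices, labelled 1,…,n, and define D_{î} = D_{[n]∖{i}}(𝒢) for each i ∈ [n]. Then for every i ∈ [n] one has (n−2)·D_{î} ≤ Σ_{j ∈ [n]∖{i}} D_{ĵ}. -/
/-!
Let `m v` be the least weight of an edge at `v` and `M = ∑_{j ≠ i} m j`. For `j ≠ i`:

* adding the lightest edge at `j` to a connected subgraph spanning `[n] ∖ {j}` gives
  `D_î ≤ D_ĵ + m j`;
* a connected subgraph spanning `[n] ∖ {j}` contains `i`, and sending every other vertex `v` of it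
  to an edge towards `i` (one step closer in the subgraph's distance) is injective, so
  `M - m j ≤ D_ĵ`.

Summing over `j ≠ i` gives `(n - 1) D_î ≤ ∑ D_ĵ + M` and `(n - 2) M ≤ ∑ D_ĵ`; the claim follows
from the first if `M ≤ D_î` and from the second otherwise.
-/

open SimpleGraph Finset

lemma Sym2.injOn_mk_of_lt {α β : Type*} [Preorder β] {S : Set α} {p : α → α} {d : α → β}
    (hd : ∀ v ∈ S, d (p v) < d v) : S.InjOn fun v => s(v, p v) := by
  intro v₁ hv₁ v₂ hv₂ heq
  rcases Sym2.eq_iff.1 heq with ⟨h, -⟩ | ⟨h₁, h₂⟩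
  · exact h
  · have : d v₁ < d v₁ :=
      calc d v₁ = d (p v₂) := by rw [h₁]
        _ < d v₂ := hd v₂ hv₂
        _ = d (p v₁) := by rw [h₂]
        _ < d v₁ := hd v₁ hv₁
    exact absurd this (lt_irrefl _)

lemma SimpleGraph.Reachable.exists_adj_dist_lt {W : Type*} {H : SimpleGraph W} {v r : W}
    (h : H.Reachable v r) (hv : v ≠ r) : ∃ u, H.Adj v u ∧ H.dist u r < H.dist v r := by
  obtain ⟨p, hp⟩ := h.exists_walk_length_eq_dist
  cases p with
  | nil => exact absurd rfl hv
  | cons hadj q =>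
    refine ⟨_, hadj, ?_⟩
    have := dist_le q
    rw [Walk.length_cons] at hp
    omega

lemma SimpleGraph.Subgraph.Connected.reachable_spanningCoe {V : Type*} {G : SimpleGraph V}
    {R : G.Subgraph} (hR : R.Connected) {u v : V} (hu : u ∈ R.verts) (hv : v ∈ R.verts) :
    R.spanningCoe.Reachable u v :=
  (hR ⟨u, hu⟩ ⟨v, hv⟩).map ⟨Subtype.val, id⟩

section MinIncidentWeight

variable {V : Type*} [Finite V] {G : SimpleGraph V} {w : Sym2 V → ℝ}

/-- `0` at an isolated vertex, as `sInf ∅ = 0`. -/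
noncomputable def minIncidentWeight (G : SimpleGraph V) (w : Sym2 V → ℝ) (v : V) : ℝ :=
  sInf ((fun u => w s(v, u)) '' G.neighborSet v)

lemma minIncidentWeight_le {u v : V} (h : G.Adj v u) : minIncidentWeight G w v ≤ w s(v, u) :=
  csInf_le (Set.toFinite _).bddBelow ⟨u, h, rfl⟩

lemma exists_adj_minIncidentWeight_eq {u v : V} (h : G.Adj v u) :
    ∃ u', G.Adj v u' ∧ minIncidentWeight G w v = w s(v, u') := by
  obtain ⟨u', hu', he⟩ : minIncidentWeight G w v ∈ (fun u => w s(v, u)) '' G.neighborSet v :=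
    Set.Nonempty.csInf_mem ⟨_, u, h, rfl⟩ (Set.toFinite _)
  exact ⟨u', hu', he.symm⟩

end MinIncidentWeight

lemma PosWeighted.nonneg_of_mem_edgeSet {V : Type} {G : SimpleGraph V} {w : Sym2 V → ℝ}
    (hw : PosWeighted G w) {R : G.Subgraph} {e : Sym2 V} (he : e ∈ R.edgeSet) : 0 ≤ w e :=
  (hw e (R.edgeSet_subset he)).le

section Weight

variable {V : Type} [Fintype V] {G : SimpleGraph V} {w : Sym2 V → ℝ}

lemma subgraphWeight_nonneg (hw : PosWeighted G w) (R : G.Subgraph) : 0 ≤ subgraphWeight w R :=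
  sum_nonneg fun _ he => hw.nonneg_of_mem_edgeSet ((Set.Finite.mem_toFinset _).1 he)

lemma subgraphWeight_sup_le (hw : PosWeighted G w) (R₁ R₂ : G.Subgraph) :
    subgraphWeight w (R₁ ⊔ R₂) ≤ subgraphWeight w R₁ + subgraphWeight w R₂ := by
  classical
  set E₁ := (Set.toFinite R₁.edgeSet).toFinset
  set E₂ := (Set.toFinite R₂.edgeSet).toFinset
  have hunion : (Set.toFinite (R₁ ⊔ R₂).edgeSet).toFinset = E₁ ∪ E₂ := by
    ext e
    simp [E₁, E₂, Subgraph.edgeSet_sup]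
  have hinter : 0 ≤ ∑ e ∈ E₁ ∩ E₂, w e := sum_nonneg fun _ he =>
    hw.nonneg_of_mem_edgeSet ((Set.Finite.mem_toFinset _).1 (mem_inter.1 he).1)
  have := sum_union_inter (s₁ := E₁) (s₂ := E₂) (f := w)
  simp only [subgraphWeight, hunion]
  linarith

lemma subgraphWeight_subgraphOfAdj {u v : V} (h : G.Adj u v) :
    subgraphWeight w (G.subgraphOfAdj h) = w s(u, v) := by
  simp [subgraphWeight, edgeSet_subgraphOfAdj]

lemma sum_le_subgraphWeight_of_injOn (hw : PosWeighted G w) {R : G.Subgraph} {S : Finset V}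
    {f : V → Sym2 V} (hf : Set.InjOn f S) (hfR : ∀ v ∈ S, f v ∈ R.edgeSet) :
    ∑ v ∈ S, w (f v) ≤ subgraphWeight w R := by
  classical
  rw [← sum_image hf]
  refine sum_le_sum_of_subset_of_nonneg ?_ fun e he _ =>
    hw.nonneg_of_mem_edgeSet ((Set.Finite.mem_toFinset _).1 he)
  intro e he
  obtain ⟨v, hv, rfl⟩ := mem_image.1 he
  exact (Set.Finite.mem_toFinset _).2 (hfR v hv)

lemma sum_minIncidentWeight_le_subgraphWeight (hw : PosWeighted G w) {R : G.Subgraph}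
    (hR : R.Connected) {r : V} (hr : r ∈ R.verts) {S : Finset V} (hS : ↑S ⊆ R.verts \ {r}) :
    ∑ v ∈ S, minIncidentWeight G w v ≤ subgraphWeight w R := by
  have hstep : ∀ v ∈ S, ∃ u, R.Adj v u ∧ R.spanningCoe.dist u r < R.spanningCoe.dist v r :=
    fun v hv => (hR.reachable_spanningCoe (hS hv).1 hr).exists_adj_dist_lt (hS hv).2
  choose! p hpAdj hpDist using hstep
  calc ∑ v ∈ S, minIncidentWeight G w v
      ≤ ∑ v ∈ S, w s(v, p v) := sum_le_sum fun v hv => minIncidentWeight_le (hpAdj v hv).adj_sub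
    _ ≤ subgraphWeight w R :=
      sum_le_subgraphWeight_of_injOn hw (Sym2.injOn_mk_of_lt (d := fun v => R.spanningCoe.dist v r) hpDist) hpAdj

lemma graphDist_le (hw : PosWeighted G w) {I : Set V} {R : G.Subgraph} (hR : R.Connected)
    (hI : I ⊆ R.verts) : graphDist G w I ≤ subgraphWeight w R :=
  csInf_le ⟨0, by rintro _ ⟨R, -, -, rfl⟩; exact subgraphWeight_nonneg hw R⟩ ⟨R, hR, hI, rfl⟩

lemma le_graphDist (hG : G.Connected) {I : Set V} {c : ℝ}
    (h : ∀ R : G.Subgraph, R.Connected → I ⊆ R.verts → c ≤ subgraphWeight w R) :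
    c ≤ graphDist G w I := by
  refine le_csInf ⟨_, ⊤, ?_, by simp, rfl⟩ ?_
  · exact Subgraph.connected_iff'.2 (Subgraph.topIso.connected_iff.2 hG)
  · rintro _ ⟨R, hR, hI, rfl⟩
    exact h R hR hI

lemma graphDist_le_add_of_adj (hG : G.Connected) (hw : PosWeighted G w) {I J : Set V}
    {u v : V} (hIJ : I ⊆ insert v J) (h : G.Adj v u) (hu : u ∈ J) :
    graphDist G w I ≤ graphDist G w J + w s(v, u) := by
  rw [← sub_le_iff_le_add]
  refine le_graphDist hG fun R hR hJ => sub_le_iff_le_add.2 ?_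
  have hconn : (R ⊔ G.subgraphOfAdj h).Connected :=
    Subgraph.connected_sup hR.preconnected (Subgraph.subgraphOfAdj_connected h).preconnected
      ⟨u, hJ hu, by simp⟩
  have hverts : I ⊆ (R ⊔ G.subgraphOfAdj h).verts := fun k hk => by
    rcases hIJ hk with rfl | hk
    · exact Or.inr (by simp)
    · exact Or.inl (hJ hk)
  calc graphDist G w I ≤ subgraphWeight w (R ⊔ G.subgraphOfAdj h) := graphDist_le hw hconn hverts
    _ ≤ subgraphWeight w R + w s(v, u) := by
      simpa [subgraphWeight_subgraphOfAdj] using subgraphWeight_sup_le hw R (G.subgraphOfAdj h)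

end Weight

section Dhat

variable {n : ℕ} {G : SimpleGraph (Fin n)} {w : Sym2 (Fin n) → ℝ}

lemma Dhat_le_Dhat_add_minIncidentWeight (hG : G.Connected) (hw : PosWeighted G w)
    {i j : Fin n} (hji : j ≠ i) : Dhat G w i ≤ Dhat G w j + minIncidentWeight G w j := by
  have : Nontrivial (Fin n) := ⟨⟨j, i, hji⟩⟩
  obtain ⟨u₀, hu₀⟩ := hG.preconnected.exists_adj_of_nontrivial j
  obtain ⟨u, hu, hm⟩ := exists_adj_minIncidentWeight_eq (w := w) hu₀
  rw [hm]
  exact graphDist_le_add_of_adj hG hw (fun k _ => eq_or_ne k j) hu hu.ne'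

lemma sum_minIncidentWeight_erase_le_Dhat (hG : G.Connected) (hw : PosWeighted G w)
    {i j : Fin n} (hji : j ≠ i) :
    ∑ v ∈ (univ.erase i).erase j, minIncidentWeight G w v ≤ Dhat G w j := by
  refine le_graphDist hG fun R hR hI => ?_
  refine sum_minIncidentWeight_le_subgraphWeight hw hR (hI hji.symm) fun v hv => ?_
  simp only [coe_erase, coe_univ, Set.mem_sdiff, Set.mem_univ, Set.mem_singleton_iff,
    true_and] at hv
  exact ⟨hI hv.2, hv.1⟩

end Dhat

/-- Theorem 4.1, necessity, part (i): the `(n-1)`-weights of a connected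
positive-weighted graph with exactly `n` vertices satisfy
`(n-2)·D_î ≤ ∑_{j≠i} D_ĵ`. -/
theorem graph_exactly_n_vertices_ineq {n : ℕ} (hn : 3 ≤ n)
    (G : SimpleGraph (Fin n)) (w : Sym2 (Fin n) → ℝ)
    (hG : G.Connected) (hw : PosWeighted G w) :
    ∀ i : Fin n, ((n : ℝ) - 2) * Dhat G w i ≤ ∑ j ∈ Finset.univ.erase i, Dhat G w j := by
  intro i
  set m := minIncidentWeight G w
  set M := ∑ j ∈ univ.erase i, m j
  have hcard : ((univ.erase i).card : ℝ) = n - 1 := by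
    rw [card_erase_of_mem (mem_univ i), card_univ, Fintype.card_fin, Nat.cast_sub i.pos,
      Nat.cast_one]
  have hA : ((n : ℝ) - 1) * Dhat G w i ≤ ∑ j ∈ univ.erase i, Dhat G w j + M := by
    rw [← hcard, ← nsmul_eq_mul, ← sum_const, ← sum_add_distrib]
    exact sum_le_sum fun j hj => Dhat_le_Dhat_add_minIncidentWeight hG hw (ne_of_mem_erase hj)
  have hB : ((n : ℝ) - 2) * M ≤ ∑ j ∈ univ.erase i, Dhat G w j :=
    calc ((n : ℝ) - 2) * M = ∑ j ∈ univ.erase i, (M - m j) := by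
          rw [sum_sub_distrib, sum_const, nsmul_eq_mul, hcard]; ring
      _ ≤ _ := sum_le_sum fun j hj => by
          rw [← sum_erase_eq_sub hj]
          exact sum_minIncidentWeight_erase_le_Dhat hG hw (ne_of_mem_erase hj)
  have hn2 : (0 : ℝ) ≤ n - 2 := by
    have : (3 : ℝ) ≤ n := by exact_mod_cast hn
    linarith
  rcases le_total (Dhat G w i) M with h | h
  · exact (mul_le_mul_of_nonneg_left h hn2).trans hB
  · linarith
end

section
/- Let n ∈ ℕ with n ≥ 3 and let {D_{î}}_{i ∈ [n]} be a family of positive real numbers such that: (i) for every i ∈ [n], (n−2)·D_{î} ≤ Σ_{j ∈ [n]∖{i}} D_{ĵ}; and (ii) if the maximum of {D_{î}}_{i ∈ [n]} is achieved by at least two indices, then all the inequalities in (i) are strict. Then there exists a connected positive-weighted graph 𝒢=(G,w) with exactly n vertices, labelled 1,…,n, such that D_{[n]∖{i}}(𝒢) = D_{î} for every i ∈ [n]. -/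
open SimpleGraph Finset

/-!
Give every vertex `v` a potential `t v ≥ 0` and every edge `s(a, b)` of the complete graph the
weight `t a + t b`, so that a subgraph `R` weighs `∑ v, deg_R v * t v`. If `R` is connected on a
vertex set `W` with `|W| ≥ 2`, every degree is at least one and the degrees add up to
`2 |E(R)| ≥ 2 |W| - 2`, so `R` weighs at least `∑ v ∈ W, t v + (|W| - 2) * min_W t`, with equality
for the star on `W` centred at a vertex of least potential. A connected subgraph containing
`[n] ∖ {i}` spans either `[n] ∖ {i}` or `[n]`, so `D_î` is the weight of such a star as soon as
the spanning subgraphs are not cheaper. It remains to choose potentials for which these star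
weights are the prescribed `D i`: if `i₀` maximises `D` and `j₁` maximises it on `[n] ∖ {i₀}`, the
minimum of `t` is taken at `i₀`, and on `[n] ∖ {i₀}` at `j₁`, which leaves a linear system in two
unknowns. Condition (i) makes the solution non-negative and the spanning subgraphs expensive
enough, and (ii) makes all edge weights positive when `D i₀ = D j₁`.
-/

namespace SimpleGraph

variable {V : Type}

def potentialWeight (t : V → ℝ) : Sym2 V → ℝ :=
  Sym2.lift ⟨fun a b => t a + t b, fun _ _ => add_comm _ _⟩

@[simp]
lemma potentialWeight_mk (t : V → ℝ) (a b : V) : potentialWeight t s(a, b) = t a + t b := rfl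

lemma Subgraph.Connected.card_verts_le_card_edgeSet_add_one {G : SimpleGraph V}
    {R : G.Subgraph} (hR : R.Connected) : Nat.card R.verts ≤ Nat.card R.edgeSet + 1 := by
  rw [← R.image_coe_edgeSet_coe,
    Nat.card_image_of_injective (Sym2.map.injective Subtype.val_injective)]
  exact hR.coe.card_vert_le_card_edgeSet_add_one

def starSubgraph (W : Set V) (c : V) : (⊤ : SimpleGraph V).Subgraph :=
  (toSubgraph (starGraph c) le_top).induce W

lemma starSubgraph_adj {W : Set V} {c a b : V} :
    (starSubgraph W c).Adj a b ↔ a ∈ W ∧ b ∈ W ∧ a ≠ b ∧ (a = c ∨ b = c) := by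
  simp [starSubgraph]

lemma starSubgraph_connected {W : Set V} {c : V} (hc : c ∈ W) :
    (starSubgraph W c).Connected := by
  rw [Subgraph.connected_iff']
  refine Connected.of_isUniversal (v := ⟨c, by exact hc⟩) fun w hw => ?_
  rw [Subgraph.coe_adj, starSubgraph_adj]
  exact ⟨hc, w.2, fun h => hw (Subtype.ext h), Or.inl rfl⟩

variable [Fintype V]

lemma Subgraph.sum_degree_eq_two_mul_card_edgeSet {G : SimpleGraph V} (R : G.Subgraph)
    [∀ v, Fintype (R.neighborSet v)] : ∑ v, R.degree v = 2 * Nat.card R.edgeSet := by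
  classical
  simp_rw [← Subgraph.degree_spanningCoe, sum_degrees_eq_twice_card_edges,
    ← Subgraph.edgeSet_spanningCoe, Nat.card_eq_fintype_card, edgeFinset_card]

lemma sum_ite_mem_eq_potentialWeight [DecidableEq V] (t : V → ℝ) {e : Sym2 V} (he : ¬e.IsDiag) :
    ∑ v, (if v ∈ e then t v else 0) = potentialWeight t e := by
  induction e with
  | _ a b =>
    have hab : a ≠ b := by simpa using he
    rw [← sum_filter, show ({v | v ∈ s(a, b)} : Finset V) = {a, b} by ext; simp,
      sum_pair hab, potentialWeight_mk]

lemma sum_edgeFinset_potentialWeight (G : SimpleGraph V) [DecidableRel G.Adj] (t : V → ℝ) :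
    ∑ e ∈ G.edgeFinset, potentialWeight t e = ∑ v, G.degree v * t v := by
  classical
  calc ∑ e ∈ G.edgeFinset, potentialWeight t e
      = ∑ e ∈ G.edgeFinset, ∑ v, if v ∈ e then t v else 0 :=
        sum_congr rfl fun e he =>
          (sum_ite_mem_eq_potentialWeight t (G.not_isDiag_of_mem_edgeSet (mem_edgeFinset.1 he))).symm
    _ = ∑ v, ∑ e ∈ G.edgeFinset with v ∈ e, t v := by rw [sum_comm]; simp only [sum_filter]
    _ = ∑ v, G.degree v * t v := by
        simp [← incidenceFinset_eq_filter, card_incidenceFinset_eq_degree]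

lemma subgraphWeight_potentialWeight {G : SimpleGraph V} (R : G.Subgraph)
    [∀ v, Fintype (R.neighborSet v)] (t : V → ℝ) :
    subgraphWeight (potentialWeight t) R = ∑ v, R.degree v * t v := by
  classical
  rw [subgraphWeight]
  simp_rw [← Subgraph.degree_spanningCoe, ← sum_edgeFinset_potentialWeight]
  congr 1
  ext e
  simp [Subgraph.edgeSet_spanningCoe]

lemma Subgraph.Connected.sum_add_card_sub_two_mul_le_subgraphWeight {G : SimpleGraph V}
    {R : G.Subgraph} (hR : R.Connected) {W : Finset V} (hRW : R.verts = W) (hW : 1 < #W)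
    {t : V → ℝ} {m : ℝ} (hm : 0 ≤ m) (hmt : ∀ v ∈ W, m ≤ t v) :
    ∑ v ∈ W, t v + (#W - 2 : ℝ) * m ≤ subgraphWeight (potentialWeight t) R := by
  classical
  have hd_out : ∀ v ∉ W, R.degree v = 0 := fun v hv =>
    Subgraph.degree_of_notMem_verts (by rwa [hRW])
  have hd_pos : ∀ v ∈ W, 1 ≤ R.degree v := fun v hv => by
    have hv' : v ∈ R.verts := by rwa [hRW]
    have hnt : ¬ R.verts.Subsingleton := by
      rw [hRW]
      exact Set.not_subsingleton_iff.2 (Finset.one_lt_card_iff_nontrivial.1 hW)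
    exact Nat.one_le_iff_ne_zero.2 ((hR.preconnected.degree_zero_iff ⟨v, hv'⟩).not.2 hnt)
  have hd_sum : ∑ v ∈ W, (R.degree v : ℝ) = 2 * Nat.card R.edgeSet := by
    rw [sum_subset (subset_univ W) fun v _ hv => by simp [hd_out v hv]]
    exact_mod_cast R.sum_degree_eq_two_mul_card_edgeSet
  have hcard : (#W : ℝ) ≤ Nat.card R.edgeSet + 1 := by
    have := hR.card_verts_le_card_edgeSet_add_one
    rw [hRW, Nat.card_coe_set_eq, Set.ncard_coe_finset] at this
    exact_mod_cast this
  have hweight : subgraphWeight (potentialWeight t) R = ∑ v ∈ W, R.degree v * t v := by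
    rw [subgraphWeight_potentialWeight, ← sum_subset (subset_univ W)
      fun v _ hv => by simp [hd_out v hv]]
  have hterm : ∀ v ∈ W, t v + (R.degree v - 1) * m ≤ R.degree v * t v := fun v hv => by
    have := hmt v hv
    have : (1 : ℝ) ≤ R.degree v := by exact_mod_cast hd_pos v hv
    nlinarith
  calc ∑ v ∈ W, t v + (#W - 2 : ℝ) * m
      ≤ ∑ v ∈ W, t v + (∑ v ∈ W, (R.degree v : ℝ) - #W) * m := by
        gcongr ?_ + ?_ * _
        · rfl
        · linarith
    _ = ∑ v ∈ W, (t v + (R.degree v - 1) * m) := by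
        rw [sum_add_distrib, ← sum_mul, sum_sub_distrib, sum_const, nsmul_one]
    _ ≤ subgraphWeight (potentialWeight t) R := hweight ▸ sum_le_sum hterm

variable [DecidableEq V]

lemma subgraphWeight_starSubgraph {W : Finset V} {c : V} (hc : c ∈ W) (t : V → ℝ) :
    subgraphWeight (potentialWeight t) (starSubgraph W c)
      = ∑ v ∈ W, t v + (#W - 2 : ℝ) * t c := by
  have hedges : (Set.toFinite (starSubgraph W c).edgeSet).toFinset
      = (W.erase c).image fun v => s(c, v) := by
    ext e
    induction e with
    | _ a b =>
      simp only [Set.Finite.mem_toFinset, Subgraph.mem_edgeSet, starSubgraph_adj, mem_image,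
        mem_erase, Sym2.eq_iff]
      grind
  have hinj : Set.InjOn (fun v => s(c, v)) (W.erase c) := fun v _ w _ h => by
    simp only [Sym2.eq_iff] at h
    grind
  rw [subgraphWeight, hedges, sum_image hinj]
  have := add_sum_erase W (fun v => t c + t v) hc
  simp only [potentialWeight_mk, sum_add_distrib, sum_const, nsmul_eq_mul] at this ⊢
  linarith

lemma graphDist_top_potentialWeight_compl_singleton {t : V → ℝ} {m : ℝ} {i c : V}
    (hV : 2 < Fintype.card V) (hci : c ≠ i) (hc : ∀ v ≠ i, t c ≤ t v) (hm : 0 ≤ m)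
    (hmt : ∀ v, m ≤ t v)
    (hspan : ∑ v ∈ univ.erase i, t v + (Fintype.card V - 3 : ℝ) * t c
      ≤ ∑ v, t v + (Fintype.card V - 2 : ℝ) * m) :
    graphDist ⊤ (potentialWeight t) {j | j ≠ i}
      = ∑ v ∈ univ.erase i, t v + (Fintype.card V - 3 : ℝ) * t c := by
  have hcard : #(univ.erase i) = Fintype.card V - 1 := by
    rw [card_erase_of_mem (mem_univ i), card_univ]
  have hcard' : (#(univ.erase i) : ℝ) = Fintype.card V - 1 := by
    rw [hcard, Nat.cast_sub (by omega), Nat.cast_one]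
  have hc' : c ∈ univ.erase i := mem_erase.2 ⟨hci, mem_univ c⟩
  refine IsLeast.csInf_eq ⟨⟨starSubgraph _ c, starSubgraph_connected hc', ?_, ?_⟩, ?_⟩
  · intro v hv
    simpa [starSubgraph] using hv
  · rw [subgraphWeight_starSubgraph hc', hcard']
    ring
  · rintro _ ⟨R, hR, hIR, rfl⟩
    by_cases hi : i ∈ R.verts
    · have hRW : R.verts = ↑(univ : Finset V) := by
        ext v
        by_cases hv : v = i
        · simp [hv, hi]
        · simpa using hIR hv
      have := hR.sum_add_card_sub_two_mul_le_subgraphWeight hRW (by rw [card_univ]; omega) hm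
        fun v _ => hmt v
      rw [card_univ] at this
      linarith
    · have hRW : R.verts = ↑(univ.erase i) := by
        ext v
        by_cases hv : v = i
        · simp [hv, hi]
        · simpa [hv] using hIR hv
      have := hR.sum_add_card_sub_two_mul_le_subgraphWeight hRW (by omega) (hm.trans (hmt c))
        fun v hv => hc v (ne_of_mem_erase hv)
      rw [hcard'] at this
      linarith

end SimpleGraph

open SimpleGraph

section Realization

variable {n : ℕ} (D : Fin n → ℝ) (i₀ j₁ : Fin n)

/- `apexPotential` and `basePotential` solve the two linear equations saying that the star on
`[n] ∖ {i}` centred at `i₀` (for `i ≠ i₀`), resp. at `j₁` (for `i = i₀`), weighs `D i`. -/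

noncomputable def apexPotential : ℝ :=
  (∑ j, D j - 2 * D i₀ - (n - 3) * D j₁) / (2 * (n - 2))

noncomputable def basePotential : ℝ :=
  (∑ j, D j + (n - 3) * D j₁) / (2 * (n - 2))

noncomputable def realizingPotential (k : Fin n) : ℝ :=
  if k = i₀ then apexPotential D i₀ j₁ else basePotential D j₁ - D k

variable {D i₀ j₁}

lemma two_mul_apexPotential (hn : 3 ≤ n) :
    2 * (n - 2) * apexPotential D i₀ j₁ = ∑ j, D j - 2 * D i₀ - (n - 3) * D j₁ :=
  mul_div_cancel₀ _ (mul_ne_zero two_ne_zero (sub_ne_zero.2 (by norm_cast; omega)))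

lemma two_mul_basePotential (hn : 3 ≤ n) :
    2 * (n - 2) * basePotential D j₁ = ∑ j, D j + (n - 3) * D j₁ :=
  mul_div_cancel₀ _ (mul_ne_zero two_ne_zero (sub_ne_zero.2 (by norm_cast; omega)))

lemma apexPotential_nonneg (hn : 3 ≤ n) (hj₁ : D j₁ ≤ D i₀)
    (hi₀ : ((n : ℝ) - 2) * D i₀ ≤ ∑ j ∈ univ.erase i₀, D j) :
    0 ≤ apexPotential D i₀ j₁ := by
  have hN : (3 : ℝ) ≤ n := by exact_mod_cast hn
  have hA := two_mul_apexPotential (D := D) (i₀ := i₀) (j₁ := j₁) hn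
  rw [sum_erase_eq_sub (mem_univ i₀)] at hi₀
  nlinarith

lemma apexPotential_le_basePotential_sub (hn : 3 ≤ n) (hj₁ : D j₁ ≤ D i₀) :
    apexPotential D i₀ j₁ ≤ basePotential D j₁ - D j₁ := by
  have hN : (3 : ℝ) ≤ n := by exact_mod_cast hn
  have hA := two_mul_apexPotential (D := D) (i₀ := i₀) (j₁ := j₁) hn
  have hB := two_mul_basePotential (D := D) (j₁ := j₁) hn
  nlinarith

lemma apexPotential_add_basePotential_sub_pos (hn : 3 ≤ n)
    (hi₀ : ((n : ℝ) - 2) * D i₀ ≤ ∑ j ∈ univ.erase i₀, D j)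
    (hj₁ : D j₁ < D i₀ ∨ D j₁ = D i₀ ∧ ((n : ℝ) - 2) * D j₁ < ∑ j ∈ univ.erase j₁, D j) :
    0 < apexPotential D i₀ j₁ + (basePotential D j₁ - D j₁) := by
  have hN : (3 : ℝ) ≤ n := by exact_mod_cast hn
  have hA := two_mul_apexPotential (D := D) (i₀ := i₀) (j₁ := j₁) hn
  have hB := two_mul_basePotential (D := D) (j₁ := j₁) hn
  rcases hj₁ with hlt | ⟨heq, hstrict⟩
  · have := apexPotential_nonneg hn hlt.le hi₀
    nlinarith
  · rw [sum_erase_eq_sub (mem_univ j₁)] at hstrict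
    nlinarith

lemma realizingPotential_add_pos (hn : 3 ≤ n) (hmax₁ : ∀ k ≠ i₀, D k ≤ D j₁)
    (hi₀ : ((n : ℝ) - 2) * D i₀ ≤ ∑ j ∈ univ.erase i₀, D j)
    (hj₁ : D j₁ < D i₀ ∨ D j₁ = D i₀ ∧ ((n : ℝ) - 2) * D j₁ < ∑ j ∈ univ.erase j₁, D j)
    {a b : Fin n} (hab : a ≠ b) :
    0 < realizingPotential D i₀ j₁ a + realizingPotential D i₀ j₁ b := by
  have hpos := apexPotential_add_basePotential_sub_pos hn hi₀ hj₁
  have hle := apexPotential_le_basePotential_sub (i₀ := i₀) hn (hj₁.elim le_of_lt (·.1.le))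
  have hbase : ∀ k ≠ i₀, basePotential D j₁ - D j₁ ≤ realizingPotential D i₀ j₁ k :=
    fun k hk => by rw [realizingPotential, if_neg hk]; linarith [hmax₁ k hk]
  have ht₀ : realizingPotential D i₀ j₁ i₀ = apexPotential D i₀ j₁ := if_pos rfl
  by_cases ha : a = i₀
  · subst ha
    linarith [hbase b (Ne.symm hab)]
  by_cases hb : b = i₀
  · subst hb
    linarith [hbase a ha]
  linarith [hbase a ha, hbase b hb]

lemma sum_realizingPotential :
    ∑ k, realizingPotential D i₀ j₁ k
      = apexPotential D i₀ j₁ + (n - 1) * basePotential D j₁ - (∑ j, D j - D i₀) := by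
  have hrest : ∀ k ∈ univ.erase i₀, realizingPotential D i₀ j₁ k = basePotential D j₁ - D k :=
    fun k hk => if_neg (ne_of_mem_erase hk)
  rw [← add_sum_erase _ _ (mem_univ i₀), sum_congr rfl hrest, sum_sub_distrib, sum_const,
    card_erase_of_mem (mem_univ i₀), sum_erase_eq_sub (mem_univ i₀), realizingPotential,
    if_pos rfl, card_univ, Fintype.card_fin, nsmul_eq_mul, Nat.cast_sub i₀.pos, Nat.cast_one]
  ring

lemma Dhat_top_realizingPotential (hn : 3 ≤ n) (hmax : ∀ k, D k ≤ D i₀) (hj₁ : j₁ ≠ i₀)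
    (hmax₁ : ∀ k ≠ i₀, D k ≤ D j₁) (hi₀ : ((n : ℝ) - 2) * D i₀ ≤ ∑ j ∈ univ.erase i₀, D j)
    (i : Fin n) : Dhat ⊤ (potentialWeight (realizingPotential D i₀ j₁)) i = D i := by
  set t := realizingPotential D i₀ j₁
  set A := apexPotential D i₀ j₁
  set B := basePotential D j₁
  have hA : 2 * (n - 2) * A = _ := two_mul_apexPotential hn
  have hB : 2 * (n - 2) * B = _ := two_mul_basePotential hn
  have hsum : ∑ k, t k = _ := sum_realizingPotential
  have ht₀ : t i₀ = A := if_pos rfl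
  have ht : ∀ k ≠ i₀, t k = B - D k := fun k hk => if_neg hk
  have hA₀ : 0 ≤ A := apexPotential_nonneg hn (hmax j₁) hi₀
  have hAB : A ≤ B - D j₁ := apexPotential_le_basePotential_sub hn (hmax j₁)
  have hlow : ∀ k, A ≤ t k := fun k => by
    by_cases hk : k = i₀
    · rw [hk, ht₀]
    · rw [ht k hk]
      linarith [hmax₁ k hk]
  have hspan : D i ≤ ∑ k, t k + (n - 2) * A := by
    rw [sum_erase_eq_sub (mem_univ i₀)] at hi₀
    have hN : (3 : ℝ) ≤ n := by exact_mod_cast hn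
    have hAB' : (n - 2) * (A + B) = ∑ j, D j - D i₀ := by linear_combination (hA + hB) / 2
    nlinarith [hmax i]
  have hV : 2 < Fintype.card (Fin n) := by rwa [Fintype.card_fin]
  rw [Dhat]
  by_cases hi : i = i₀
  · subst hi
    have hval : ∑ k ∈ univ.erase i, t k + (Fintype.card (Fin n) - 3 : ℝ) * t j₁ = D i := by
      rw [sum_erase_eq_sub (mem_univ i), hsum, ht₀, ht j₁ hj₁, Fintype.card_fin]
      linear_combination hB
    rw [graphDist_top_potentialWeight_compl_singleton hV hj₁
      (fun k hk => by rw [ht j₁ hj₁, ht k hk]; linarith [hmax₁ k hk]) hA₀ hlow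
      (by rw [hval, Fintype.card_fin]; exact hspan), hval]
  · have hval : ∑ k ∈ univ.erase i, t k + (Fintype.card (Fin n) - 3 : ℝ) * t i₀ = D i := by
      rw [sum_erase_eq_sub (mem_univ i), hsum, ht₀, ht i hi, Fintype.card_fin]
      linear_combination (hA + hB) / 2
    rw [graphDist_top_potentialWeight_compl_singleton hV (Ne.symm hi)
      (fun k _ => ht₀ ▸ hlow k) hA₀ hlow (by rw [hval, Fintype.card_fin]; exact hspan), hval]

end Realization

theorem graph_exactly_n_vertices_exists_general {n : ℕ} (hn : 3 ≤ n) (D : Fin n → ℝ)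
    (hineq : ∀ i : Fin n, ((n : ℝ) - 2) * D i ≤ ∑ j ∈ Finset.univ.erase i, D j)
    (hstrict : (∃ i j : Fin n, i ≠ j ∧ (∀ k, D k ≤ D i) ∧ D i = D j) →
      ∀ i : Fin n, ((n : ℝ) - 2) * D i < ∑ j ∈ Finset.univ.erase i, D j) :
    ∃ (G : SimpleGraph (Fin n)) (w : Sym2 (Fin n) → ℝ),
      G.Connected ∧ PosWeighted G w ∧ ∀ i : Fin n, Dhat G w i = D i := by
  have : Nonempty (Fin n) := ⟨⟨0, by omega⟩⟩
  obtain ⟨i₀, hmax⟩ := Finite.exists_max D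
  obtain ⟨j₁, hj₁, hmax₁⟩ := (univ.erase i₀).exists_max_image D
    (card_pos.1 (by rw [card_erase_of_mem (mem_univ i₀), card_univ, Fintype.card_fin]; omega))
  simp only [mem_erase, mem_univ, and_true] at hj₁ hmax₁
  have hgap : D j₁ < D i₀ ∨
      D j₁ = D i₀ ∧ ((n : ℝ) - 2) * D j₁ < ∑ j ∈ univ.erase j₁, D j := by
    rcases (hmax j₁).lt_or_eq with h | h
    · exact Or.inl h
    · exact Or.inr ⟨h, hstrict ⟨i₀, j₁, Ne.symm hj₁, hmax, h.symm⟩ j₁⟩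
  refine ⟨⊤, potentialWeight (realizingPotential D i₀ j₁), connected_top, fun e he => ?_,
    Dhat_top_realizingPotential hn hmax hj₁ hmax₁ (hineq i₀)⟩
  induction e with
  | _ a b => exact realizingPotential_add_pos hn hmax₁ (hineq i₀) hgap he

/-- Theorem 4.1, sufficiency: a family of positive reals satisfying (i) and
(ii) is realized by a connected positive-weighted graph with exactly `n`
vertices. -/
theorem graph_exactly_n_vertices_exists {n : ℕ} (hn : 3 ≤ n) (D : Fin n → ℝ)
    (hD : ∀ i, 0 < D i)
    (hineq : ∀ i : Fin n, ((n : ℝ) - 2) * D i ≤ ∑ j ∈ Finset.univ.erase i, D j)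
    (hstrict : (∃ i j : Fin n, i ≠ j ∧ (∀ k, D k ≤ D i) ∧ D i = D j) →
      ∀ i : Fin n, ((n : ℝ) - 2) * D i < ∑ j ∈ Finset.univ.erase i, D j) :
    ∃ (G : SimpleGraph (Fin n)) (w : Sym2 (Fin n) → ℝ),
      G.Connected ∧ PosWeighted G w ∧ ∀ i : Fin n, Dhat G w i = D i :=
  graph_exactly_n_vertices_exists_general hn D hineq hstrict
end

section
/- Let n ∈ ℕ with n ≥ 3 and let {D_{î}}_{i ∈ [n]} be a family of positive real numbers such that (n−2)·D_{î} ≤ Σ_{j ∈ [n]∖{i}} D_{ĵ} for every i ∈ [n]. Then for every k ∈ ℕ with 1 ≤ k ≤ n−2 and all distinct indices i, i_1, …, i_{k+1} ∈ [n], one has k·D_{î} ≤ Σ_{j ∈ {i_1,…,i_{k+1}}} D_{ĵ}. -/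
open Finset

/-- Remark 4.2: the inequalities `(n-2)·D_î ≤ ∑_{j≠i} D_ĵ` imply
`k·D_î ≤ ∑ D_ĵ` over any `k+1` indices distinct from `i`, for `1 ≤ k ≤ n-2`. -/
theorem ineq_implies_k_ineq {n : ℕ} (hn : 3 ≤ n) (D : Fin n → ℝ)
    (hD : ∀ i, 0 < D i)
    (hineq : ∀ i : Fin n, ((n : ℝ) - 2) * D i ≤ ∑ j ∈ Finset.univ.erase i, D j) :
    ∀ k : ℕ, 1 ≤ k → k ≤ n - 2 →
      ∀ (i : Fin n) (f : Fin (k + 1) → Fin n), Function.Injective f →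
        (∀ m, f m ≠ i) → (k : ℝ) * D i ≤ ∑ m : Fin (k + 1), D (f m) := by
  intro k hk1 hk2 i f hf hfi
  have hn2 : k + 2 ≤ n := by omega
  set T := ∑ j, D j with hT
  have hTi : ∀ j : Fin n, ((n : ℝ) - 1) * D j ≤ T := by
    intro j
    have h := hineq j
    have he : ∑ x ∈ Finset.univ.erase j, D x = T - D j :=
      Finset.sum_erase_eq_sub (Finset.mem_univ j)
    rw [he] at h
    linarith
  set s : Finset (Fin n) := Finset.image f Finset.univ with hs
  have hcard : s.card = k + 1 := by
    rw [hs, Finset.card_image_of_injective _ hf, Finset.card_univ, Fintype.card_fin]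
  have hsum_s : ∑ j ∈ s, D j = ∑ m : Fin (k + 1), D (f m) := by
    rw [hs, Finset.sum_image (fun a _ b _ h => hf h)]
  have hsub : s ⊆ Finset.univ.erase i := by
    intro x hx
    rw [hs] at hx
    obtain ⟨m, _, rfl⟩ := Finset.mem_image.mp hx
    exact Finset.mem_erase.mpr ⟨hfi m, Finset.mem_univ _⟩
  set r := (Finset.univ.erase i) \ s with hr
  have hrcard : r.card = n - k - 2 := by
    rw [hr, Finset.card_sdiff_of_subset hsub, Finset.card_erase_of_mem (Finset.mem_univ i),
      Finset.card_univ, Fintype.card_fin, hcard]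
    omega
  have hsplit : ∑ j ∈ Finset.univ.erase i, D j = (∑ j ∈ s, D j) + ∑ j ∈ r, D j := by
    rw [hr, ← Finset.sum_sdiff hsub]; ring
  have hTsplit : T = D i + (∑ j ∈ s, D j) + ∑ j ∈ r, D j := by
    have he : ∑ x ∈ Finset.univ.erase i, D x = T - D i :=
      Finset.sum_erase_eq_sub (Finset.mem_univ i)
    rw [hsplit] at he
    linarith
  have hrc : ((r.card : ℕ) : ℝ) = (n : ℝ) - k - 2 := by
    rw [hrcard, show n - k - 2 = n - (k + 2) from by omega, Nat.cast_sub hn2]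
    push_cast; ring
  have hrbound : ((n : ℝ) - 1) * ∑ j ∈ r, D j ≤ ((n : ℝ) - k - 2) * T := by
    rw [Finset.mul_sum]
    calc ∑ j ∈ r, ((n : ℝ) - 1) * D j ≤ ∑ j ∈ r, T :=
          Finset.sum_le_sum (fun j _ => hTi j)
      _ = (r.card : ℝ) * T := by rw [Finset.sum_const, nsmul_eq_mul]
      _ = ((n : ℝ) - k - 2) * T := by rw [hrc]
  have hk0 : (0 : ℝ) ≤ (k : ℝ) := Nat.cast_nonneg k
  have h1 : ((n : ℝ) - 1) * ((k : ℝ) * D i) ≤ (k : ℝ) * T := by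
    have := mul_le_mul_of_nonneg_left (hTi i) hk0
    linarith [this]
  have h2 : (k : ℝ) * T ≤ ((n : ℝ) - 1) * ∑ j ∈ s, D j := by
    have hii := hTi i
    nlinarith [hrbound, hTsplit]
  have hnpos : (0 : ℝ) < (n : ℝ) - 1 := by
    have : (3 : ℝ) ≤ (n : ℝ) := by exact_mod_cast hn
    linarith
  have := le_of_mul_le_mul_left (le_trans h1 h2) hnpos
  rw [hsum_s] at this
  exact this
end

section
/- Let 𝒢=(G,w) be a positive-weighted graph whose vertex set contains the distinct vertices 1,2,3,4, with all four vertices in a common connected component. For i ∈ [4] write D_{î} = D_{[4]∖{i}}(𝒢). Then for all distinct i, j, k, t ∈ [4] one has 5·D_{t̂} ≤ 3·D_{k̂} + 3·D_{ĵ} + 2·D_{î}. -/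
open SimpleGraph Finset

/-!
A connected subgraph `R` containing vertices `x, y, z` splits into three edge-disjoint connected
legs joining `x`, `y`, `z` to a common branch vertex `m`: take a path from `x` to `y` in `R`, let
`m` be the first vertex on it of a walk in `R` from `z` to `y`, and cut both at `m`. Hence the
three leg weights add up to at most the weight of `R`.

Take such tripods in optimal subgraphs for `{i, j, t}`, `{i, k, t}` and `{j, k, t}` (optimal
subgraphs exist since there are only finitely many subgraphs). From their nine legs one can glue
five connected subgraphs containing `i, j, k`, using every leg of the first two tripods three
times and every leg of the third twice; this gives `5 D_t̂ ≤ 3 D_k̂ + 3 D_ĵ + 2 D_î`.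
-/

theorem SimpleGraph.Subgraph.disjoint_edgeSet_of_verts_inter_subset_singleton {V : Type}
    {G : SimpleGraph V} {A B : G.Subgraph} {v : V} (h : A.verts ∩ B.verts ⊆ {v}) :
    Disjoint A.edgeSet B.edgeSet := by
  refine Set.disjoint_left.2 fun e heA heB => ?_
  induction e using Sym2.ind with
  | h a b =>
    have ha : a = v := h ⟨A.edge_vert heA, B.edge_vert heB⟩
    have hb : b = v := h ⟨A.edge_vert (Sym2.eq_swap ▸ heA), B.edge_vert (Sym2.eq_swap ▸ heB)⟩
    exact (A.adj_sub heA).ne (ha.trans hb.symm)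

theorem SimpleGraph.Walk.toSubgraph_takeUntil_le {V : Type} {G : SimpleGraph V} [DecidableEq V]
    {u v x : V} (p : G.Walk u v) (hx : x ∈ p.support) :
    (p.takeUntil x hx).toSubgraph ≤ p.toSubgraph := by
  conv_rhs => rw [← p.take_spec hx, Walk.toSubgraph_append]
  exact le_sup_left

section

variable {V : Type} [Fintype V] {G : SimpleGraph V} {w : Sym2 V → ℝ}

theorem subgraphWeight_eq_finsum (R : G.Subgraph) : subgraphWeight w R = ∑ᶠ e ∈ R.edgeSet, w e :=
  (finsum_mem_eq_finite_toFinset_sum w _).symm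

theorem subgraphWeight_mono (hw : ∀ e ∈ G.edgeSet, 0 ≤ w e) {A B : G.Subgraph} (h : A ≤ B) :
    subgraphWeight w A ≤ subgraphWeight w B :=
  Finset.sum_le_sum_of_subset_of_nonneg
    (Set.Finite.toFinset_subset_toFinset.2 (Subgraph.edgeSet_mono h))
    fun e he _ => hw e (B.edgeSet_subset ((Set.Finite.mem_toFinset _).1 he))

theorem subgraphWeight_sup_of_disjoint {A B : G.Subgraph} (h : Disjoint A.edgeSet B.edgeSet) :
    subgraphWeight w (A ⊔ B) = subgraphWeight w A + subgraphWeight w B := by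
  simp only [subgraphWeight_eq_finsum, Subgraph.edgeSet_sup]
  exact finsum_mem_union h (Set.toFinite _) (Set.toFinite _)

theorem subgraphWeight_sup_le_s11 (hw : ∀ e ∈ G.edgeSet, 0 ≤ w e) (A B : G.Subgraph) :
    subgraphWeight w (A ⊔ B) ≤ subgraphWeight w A + subgraphWeight w B := by
  have hinter : 0 ≤ ∑ᶠ e ∈ A.edgeSet ∩ B.edgeSet, w e :=
    finsum_nonneg fun e => finsum_nonneg fun he => hw e (A.edgeSet_subset he.1)
  have := finsum_mem_union_inter (f := w) (Set.toFinite A.edgeSet) (Set.toFinite B.edgeSet)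
  simp only [subgraphWeight_eq_finsum, Subgraph.edgeSet_sup]
  linarith

variable (G w) in
def Spans (I : Set V) (c : ℝ) : Prop :=
  ∃ R : G.Subgraph, R.Connected ∧ I ⊆ R.verts ∧ subgraphWeight w R ≤ c

theorem SimpleGraph.Walk.spans {u v : V} (p : G.Walk u v) :
    Spans G w {u, v} (subgraphWeight w p.toSubgraph) :=
  ⟨p.toSubgraph, p.toSubgraph_connected, by simp [Set.insert_subset_iff], le_rfl⟩

theorem Spans.subset {I J : Set V} {c : ℝ} (h : Spans G w I c) (hJ : J ⊆ I) : Spans G w J c :=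
  let ⟨R, hR, hI, hc⟩ := h
  ⟨R, hR, hJ.trans hI, hc⟩

theorem Spans.union (hw : ∀ e ∈ G.edgeSet, 0 ≤ w e) {I J : Set V} {a b : ℝ}
    (hI : Spans G w I a) (hJ : Spans G w J b) (hIJ : (I ∩ J).Nonempty) :
    Spans G w (I ∪ J) (a + b) := by
  obtain ⟨A, hA, hIA, ha⟩ := hI
  obtain ⟨B, hB, hJB, hb⟩ := hJ
  obtain ⟨v, hvI, hvJ⟩ := hIJ
  exact ⟨A ⊔ B, Subgraph.connected_sup hA.preconnected hB.preconnected ⟨v, hIA hvI, hJB hvJ⟩,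
    Set.union_subset_union hIA hJB, (subgraphWeight_sup_le_s11 hw A B).trans (add_le_add ha hb)⟩

variable (G w) in
theorem finite_setOf_subgraphWeight (I : Set V) :
    {x : ℝ | ∃ R : G.Subgraph, R.Connected ∧ I ⊆ R.verts ∧ subgraphWeight w R = x}.Finite :=
  (Set.finite_range (subgraphWeight w)).subset fun _ ⟨R, _, _, hR⟩ => ⟨R, hR⟩

theorem Spans.graphDist_le {I : Set V} {c : ℝ} (h : Spans G w I c) : graphDist G w I ≤ c := by
  obtain ⟨R, hR, hI, hc⟩ := h
  exact (csInf_le (finite_setOf_subgraphWeight G w I).bddBelow ⟨R, hR, hI, rfl⟩).trans hc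

theorem Spans.spans_graphDist {I : Set V} {c : ℝ} (h : Spans G w I c) :
    Spans G w I (graphDist G w I) := by
  obtain ⟨R, hR, hI, -⟩ := h
  obtain ⟨S, hS, hIS, hSw⟩ :=
    Set.Nonempty.csInf_mem (by exact ⟨_, R, hR, hI, rfl⟩) (finite_setOf_subgraphWeight G w I)
  exact ⟨S, hS, hIS, hSw.le⟩

theorem Spans.exists_tripod (hw : ∀ e ∈ G.edgeSet, 0 ≤ w e) {x y z : V} {c : ℝ}
    (h : Spans G w {x, y, z} c) :
    ∃ m a b d, Spans G w {x, m} a ∧ Spans G w {y, m} b ∧ Spans G w {z, m} d ∧ a + b + d ≤ c := by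
  classical
  obtain ⟨R, hR, hxyz, hRc⟩ := h
  simp only [Set.insert_subset_iff, Set.singleton_subset_iff] at hxyz
  obtain ⟨hx, hy, hz⟩ := hxyz
  obtain ⟨p₀, hp₀R⟩ := (R.connected_iff_forall_exists_walk_subgraph.1 hR).2 hx hy
  obtain ⟨q, hqR⟩ := (R.connected_iff_forall_exists_walk_subgraph.1 hR).2 hz hy
  set p := p₀.bypass
  have hpR : p.toSubgraph ≤ R := Walk.toSubgraph_bypass_le_toSubgraph.trans hp₀R
  obtain ⟨m, hmp, hmq, hfirst⟩ :=
    q.exists_mem_support_forall_mem_support_imp_eq p.support.toFinset ⟨y, by simp⟩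
  rw [List.mem_toFinset] at hmp
  set A := (p.takeUntil m hmp).toSubgraph
  set B := (p.dropUntil m hmp).toSubgraph
  set C := (q.takeUntil m hmq).toSubgraph
  have hAB : A ⊔ B = p.toSubgraph := by rw [← Walk.toSubgraph_append, p.take_spec]
  have hdisjAB : Disjoint A.edgeSet B.edgeSet := by
    rw [Walk.edgeSet_toSubgraph, Walk.edgeSet_toSubgraph]
    exact Set.disjoint_left.2 fun e he he' =>
      (p₀.bypass_isPath.isTrail.disjoint_edges_takeUntil_dropUntil hmp) he he'
  have hdisjC : Disjoint (A ⊔ B).edgeSet C.edgeSet := by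
    refine Subgraph.disjoint_edgeSet_of_verts_inter_subset_singleton (v := m) ?_
    rintro v ⟨hvp, hvC⟩
    rw [hAB, Walk.verts_toSubgraph] at hvp
    rw [Walk.verts_toSubgraph] at hvC
    exact hfirst v (List.mem_toFinset.2 hvp) hvC
  refine ⟨m, _, _, _, (p.takeUntil m hmp).spans,
    Walk.toSubgraph_reverse _ ▸ (p.dropUntil m hmp).reverse.spans, (q.takeUntil m hmq).spans, ?_⟩
  calc subgraphWeight w A + subgraphWeight w B + subgraphWeight w C
      = subgraphWeight w (A ⊔ B ⊔ C) := by
        rw [subgraphWeight_sup_of_disjoint hdisjC, subgraphWeight_sup_of_disjoint hdisjAB]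
    _ ≤ subgraphWeight w R :=
        subgraphWeight_mono hw (sup_le (hAB ▸ hpR) ((q.toSubgraph_takeUntil_le hmq).trans hqR))
    _ ≤ c := hRc

theorem five_mul_graphDist_le (hw : ∀ e ∈ G.edgeSet, 0 ≤ w e) {x y z u : V} {a b c : ℝ}
    (hR : Spans G w {x, y, u} a) (hS : Spans G w {x, z, u} b) (hU : Spans G w {y, z, u} c) :
    5 * graphDist G w {x, y, z} ≤ 3 * a + 3 * b + 2 * c := by
  obtain ⟨mR, rx, ry, ru, hrx, hry, hru, hr⟩ := hR.exists_tripod hw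
  obtain ⟨mS, sx, sz, su, hsx, hsz, hsu, hs⟩ := hS.exists_tripod hw
  obtain ⟨mU, uy, uz, uu, huy, huz, huu, hu⟩ := hU.exists_tripod hw
  have h₁ : graphDist G w {x, y, z} ≤ rx + ry + sx + sz :=
    ((((hrx.union hw hry ⟨mR, by simp⟩).union hw hsx ⟨x, by simp⟩).union hw hsz
      ⟨mS, by simp⟩).subset (by simp [Set.insert_subset_iff])).graphDist_le
  have h₂ : graphDist G w {x, y, z} ≤ rx + ry + ru + su + sz :=
    (((((hrx.union hw hry ⟨mR, by simp⟩).union hw hru ⟨mR, by simp⟩).union hw hsu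
      ⟨u, by simp⟩).union hw hsz ⟨mS, by simp⟩).subset
      (by simp [Set.insert_subset_iff])).graphDist_le
  have h₃ : graphDist G w {x, y, z} ≤ sx + sz + su + ru + ry :=
    (((((hsx.union hw hsz ⟨mS, by simp⟩).union hw hsu ⟨mS, by simp⟩).union hw hru
      ⟨u, by simp⟩).union hw hry ⟨mR, by simp⟩).subset
      (by simp [Set.insert_subset_iff])).graphDist_le
  have h₄ : graphDist G w {x, y, z} ≤ rx + ru + uu + uy + uz :=
    (((((hrx.union hw hru ⟨mR, by simp⟩).union hw huu ⟨u, by simp⟩).union hw huy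
      ⟨mU, by simp⟩).union hw huz ⟨mU, by simp⟩).subset
      (by simp [Set.insert_subset_iff])).graphDist_le
  have h₅ : graphDist G w {x, y, z} ≤ sx + su + uu + uy + uz :=
    (((((hsx.union hw hsu ⟨mS, by simp⟩).union hw huu ⟨u, by simp⟩).union hw huy
      ⟨mU, by simp⟩).union hw huz ⟨mU, by simp⟩).subset
      (by simp [Set.insert_subset_iff])).graphDist_le
  linarith

theorem five_mul_graphDist_le_of_reachable (hw : ∀ e ∈ G.edgeSet, 0 ≤ w e) {x y z u : V}
    (hx : G.Reachable x u) (hy : G.Reachable y u) (hz : G.Reachable z u) :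
    5 * graphDist G w {x, y, z} ≤
      3 * graphDist G w {x, y, u} + 3 * graphDist G w {x, z, u} + 2 * graphDist G w {y, z, u} := by
  have spans_triple {a b : V} (ha : G.Reachable a u) (hb : G.Reachable b u) :
      ∃ c, Spans G w {a, b, u} c := by
    obtain ⟨pa⟩ := ha
    obtain ⟨pb⟩ := hb
    exact ⟨_, (pa.spans.union hw pb.spans ⟨u, by simp⟩).subset (by simp [Set.insert_subset_iff])⟩
  obtain ⟨_, hxy⟩ := spans_triple hx hy
  obtain ⟨_, hxz⟩ := spans_triple hx hz
  obtain ⟨_, hyz⟩ := spans_triple hy hz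
  exact five_mul_graphDist_le hw hxy.spans_graphDist hxz.spans_graphDist hyz.spans_graphDist

end

theorem Fin.setOf_ne_eq_of_pairwise_ne {a b c d : Fin 4} (hab : a ≠ b) (hac : a ≠ c)
    (had : a ≠ d) (hbc : b ≠ c) (hbd : b ≠ d) (hcd : c ≠ d) :
    {m | m ≠ d} = ({a, b, c} : Set (Fin 4)) := by
  ext m
  simp only [Set.mem_ofPred_eq, Set.mem_insert_iff, Set.mem_singleton_iff]
  omega

theorem four_vertices_five_ineq_general {V : Type} [Fintype V]
    (G : SimpleGraph V) (w : Sym2 V → ℝ) (hw : PosWeighted G w)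
    (ι : Fin 4 → V)
    (hconn : ∀ i j : Fin 4, G.Reachable (ι i) (ι j)) :
    ∀ i j k t : Fin 4, i ≠ j → i ≠ k → i ≠ t → j ≠ k → j ≠ t → k ≠ t →
      5 * graphDist G w (ι '' {m | m ≠ t}) ≤
        3 * graphDist G w (ι '' {m | m ≠ k}) + 3 * graphDist G w (ι '' {m | m ≠ j}) +
          2 * graphDist G w (ι '' {m | m ≠ i}) := by
  intro i j k t hij hik hit hjk hjt hkt
  rw [Fin.setOf_ne_eq_of_pairwise_ne hij hik hit hjk hjt hkt,
    Fin.setOf_ne_eq_of_pairwise_ne hij hit hik hjt hjk hkt.symm,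
    Fin.setOf_ne_eq_of_pairwise_ne hik hit hij hkt hjk.symm hjt.symm,
    Fin.setOf_ne_eq_of_pairwise_ne hjk hjt hij.symm hkt hik.symm hit.symm]
  simp only [Set.image_insert_eq, Set.image_singleton]
  exact five_mul_graphDist_le_of_reachable (fun e he => (hw e he).le)
    (hconn i t) (hconn j t) (hconn k t)

/-- Theorem 4.4, necessity (i): for four distinct vertices `1,2,3,4` in a common
connected component of a positive-weighted graph, `5·D_t̂ ≤ 3·D_k̂ + 3·D_ĵ + 2·D_î`. -/
theorem four_vertices_five_ineq {V : Type} [Fintype V]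
    (G : SimpleGraph V) (w : Sym2 V → ℝ) (hw : PosWeighted G w)
    (ι : Fin 4 → V) (hι : Function.Injective ι)
    (hconn : ∀ i j : Fin 4, G.Reachable (ι i) (ι j)) :
    ∀ i j k t : Fin 4, i ≠ j → i ≠ k → i ≠ t → j ≠ k → j ≠ t → k ≠ t →
      5 * graphDist G w (ι '' {m | m ≠ t}) ≤
        3 * graphDist G w (ι '' {m | m ≠ k}) + 3 * graphDist G w (ι '' {m | m ≠ j}) +
          2 * graphDist G w (ι '' {m | m ≠ i}) :=
  four_vertices_five_ineq_general G w hw ι hconn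
end

section
/- Let D_{1̂}, D_{2̂}, D_{3̂}, D_{4̂} be positive real numbers such that 5·D_{t̂} ≤ 3·D_{k̂} + 3·D_{ĵ} + 2·D_{î} for all distinct i, j, k, t ∈ [4]. Then the triangle inequalities hold: D_{î} ≤ D_{ĵ} + D_{k̂} for all distinct i, j, k ∈ [4]. -/
/-- Remark 4.5: condition (i) of Theorem 4.4 implies the triangle inequalities. -/
theorem five_ineq_implies_triangle (D : Fin 4 → ℝ) (hD : ∀ i, 0 < D i)
    (h1 : ∀ i j k t : Fin 4, i ≠ j → i ≠ k → i ≠ t → j ≠ k → j ≠ t → k ≠ t →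
      5 * D t ≤ 3 * D k + 3 * D j + 2 * D i) :
    ∀ i j k : Fin 4, i ≠ j → i ≠ k → j ≠ k → D i ≤ D j + D k := by
  intro i j k hij hik hjk
  obtain ⟨t, hti, htj, htk⟩ : ∃ t : Fin 4, t ≠ i ∧ t ≠ j ∧ t ≠ k := by
    revert hij hik hjk; revert i j k; decide
  have h2 := h1 t j k i htj htk hti hjk (Ne.symm hij) (Ne.symm hik)
  have h3 := h1 i j k t hij hik (Ne.symm hti) hjk (Ne.symm htj) (Ne.symm htk)
  linarith
end
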